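/- If Γ ⊢ A : K in declarative Fω.. kinding and A →β B (one-step β-reduction of types), then Γ ⊢ A = B : K (declarative type equality); similarly if Γ ⊢ J kd and J →β K then Γ ⊢ J = K. Consequently kinding is preserved by β-reduction: Γ ⊢ A : K and A →β* B imply Γ ⊢ B : K. -/

import Mathlib

set_option autoImplicit true
set_option maxHeartbeats 1000000
set_option linter.unusedVariables false

/-- Shapes (simple kinds): `k ::= ∗ | k → k`. -/
inductive SKind : Type
  | star
  | arr (j k : SKind)
/-! ## Ordinary (direct) syntax of Fω.., de Bruijn representation.
A single namespace of variables is used for both term and type variables;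
contexts record which bindings are term bindings and which are type bindings. -/

mutual
/-- Types of Fω..: `A ::= X | ⊤ | ⊥ | A → B | ∀X:K.A | λX:K.A | A B`. -/
inductive Ty : Type
  | var (x : ℕ)
  | top
  | bot
  | arr (a b : Ty)
  | all (k : Kd) (a : Ty)
  | lam (k : Kd) (a : Ty)
  | app (a b : Ty)

/-- Kinds of Fω..: `K ::= A..B | (X:J)→K`. -/
inductive Kd : Type
  | intv (a b : Ty)
  | pi (j : Kd) (k : Kd)
end

/-- Terms of Fω..: `t ::= x | λx:A.t | s t | ΛX:K.t | t A`. -/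
inductive Tm : Type
  | var (x : ℕ)
  | lam (a : Ty) (t : Tm)
  | app (s t : Tm)
  | tlam (k : Kd) (t : Tm)
  | tapp (t : Tm) (a : Ty)

mutual
/-- Shift (weakening): increment all variables `≥ c` by one. -/
def Ty.shift (c : ℕ) : Ty → Ty
  | .var x => if x < c then .var x else .var (x + 1)
  | .top => .top
  | .bot => .bot
  | .arr a b => .arr (a.shift c) (b.shift c)
  | .all k a => .all (k.shift c) (a.shift (c + 1))
  | .lam k a => .lam (k.shift c) (a.shift (c + 1))
  | .app a b => .app (a.shift c) (b.shift c)

def Kd.shift (c : ℕ) : Kd → Kd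
  | .intv a b => .intv (a.shift c) (b.shift c)
  | .pi j k => .pi (j.shift c) (k.shift (c + 1))
end

mutual
/-- Capture-avoiding substitution of the type `v` for type variable `x` in a type. -/
def Ty.subst : Ty → ℕ → Ty → Ty
  | .var y, x, v => if y = x then v else if x < y then .var (y - 1) else .var y
  | .top, _, _ => .top
  | .bot, _, _ => .bot
  | .arr a b, x, v => .arr (a.subst x v) (b.subst x v)
  | .all k a, x, v => .all (k.subst x v) (a.subst (x + 1) (v.shift 0))
  | .lam k a, x, v => .lam (k.subst x v) (a.subst (x + 1) (v.shift 0))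
  | .app a b, x, v => .app (a.subst x v) (b.subst x v)

/-- Capture-avoiding substitution of the type `v` for type variable `x` in a kind. -/
def Kd.subst : Kd → ℕ → Ty → Kd
  | .intv a b, x, v => .intv (a.subst x v) (b.subst x v)
  | .pi j k, x, v => .pi (j.subst x v) (k.subst (x + 1) (v.shift 0))
end

/-- Shift on terms (single variable namespace: every binder shifts). -/
def Tm.shift (c : ℕ) : Tm → Tm
  | .var x => if x < c then .var x else .var (x + 1)
  | .lam a t => .lam (a.shift c) (t.shift (c + 1))
  | .app s t => .app (s.shift c) (t.shift c)
  | .tlam k t => .tlam (k.shift c) (t.shift (c + 1))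
  | .tapp t a => .tapp (t.shift c) (a.shift c)

/-- Capture-avoiding substitution of the type `v` for type variable `x` in a term. -/
def Tm.substTy : Tm → ℕ → Ty → Tm
  | .var y, x, _ => if x < y then .var (y - 1) else .var y
  | .lam a t, x, v => .lam (a.subst x v) (t.substTy (x + 1) (v.shift 0))
  | .app s t, x, v => .app (s.substTy x v) (t.substTy x v)
  | .tlam k t, x, v => .tlam (k.subst x v) (t.substTy (x + 1) (v.shift 0))
  | .tapp t a, x, v => .tapp (t.substTy x v) (a.subst x v)

mutual
/-- Strengthening used when substituting a *term* for a variable: type variables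
cannot be hit, only renumbered. -/
def Ty.strTm (x : ℕ) : Ty → Ty
  | .var y => if x < y then .var (y - 1) else .var y
  | .top => .top
  | .bot => .bot
  | .arr a b => .arr (a.strTm x) (b.strTm x)
  | .all k a => .all (k.strTm x) (a.strTm (x + 1))
  | .lam k a => .lam (k.strTm x) (a.strTm (x + 1))
  | .app a b => .app (a.strTm x) (b.strTm x)

def Kd.strTm (x : ℕ) : Kd → Kd
  | .intv a b => .intv (a.strTm x) (b.strTm x)
  | .pi j k => .pi (j.strTm x) (k.strTm (x + 1))
end

/-- Capture-avoiding substitution of the term `v` for term variable `x` in a term. -/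
def Tm.subst : Tm → ℕ → Tm → Tm
  | .var y, x, v => if y = x then v else if x < y then .var (y - 1) else .var y
  | .lam a t, x, v => .lam (a.strTm x) (t.subst (x + 1) (v.shift 0))
  | .app s t, x, v => .app (s.subst x v) (t.subst x v)
  | .tlam k t, x, v => .tlam (k.strTm x) (t.subst (x + 1) (v.shift 0))
  | .tapp t a, x, v => .tapp (t.subst x v) (a.strTm x)

/-- Shape (simple-kind) erasure of kinds: `|A..B| = ∗`, `|(X:J)→K| = |J| → |K|`. -/
def Kd.shape : Kd → SKind
  | .intv _ _ => .star
  | .pi j k => .arr j.shape k.shape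
/-! ## The declarative system of Fω.. -/

/-- Context bindings: type-variable bindings `X : K` and term-variable
bindings `x : A`. -/
inductive OBind : Type
  | ty (k : Kd)
  | tm (a : Ty)

/-- Typing contexts (innermost binding first, de Bruijn style). -/
abbrev Ctx := List OBind

/-- The kind `∗` of proper types: `∗ := ⊥..⊤`. -/
def Kd.star : Kd := .intv .bot .top

/-- Weakening by `n` innermost variables. -/
def Kd.weaken (n : ℕ) (k : Kd) : Kd := (Kd.shift 0)^[n] k

/-- Weakening by `n` innermost variables. -/
def Ty.weaken (n : ℕ) (a : Ty) : Ty := (Ty.shift 0)^[n] a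

mutual
/-- Context formation `Γ ctx`. -/
inductive CtxWf : Ctx → Prop
  | nil : CtxWf []
  | ty : CtxWf Γ → KdWf Γ K → CtxWf (.ty K :: Γ)
  | tm : CtxWf Γ → Kinding Γ A Kd.star → CtxWf (.tm A :: Γ)

/-- Kind formation `Γ ⊢ K kd`. -/
inductive KdWf : Ctx → Kd → Prop
  | intv : Kinding Γ A Kd.star → Kinding Γ B Kd.star → KdWf Γ (.intv A B)
  | pi : KdWf Γ J → KdWf (.ty J :: Γ) K → KdWf Γ (.pi J K)

/-- Kinding `Γ ⊢ A : K`. -/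
inductive Kinding : Ctx → Ty → Kd → Prop
  | var : CtxWf Γ → Γ[x]? = some (.ty K) → Kinding Γ (.var x) (K.weaken (x + 1))
  | top : CtxWf Γ → Kinding Γ .top Kd.star
  | bot : CtxWf Γ → Kinding Γ .bot Kd.star
  | arr : Kinding Γ A Kd.star → Kinding Γ B Kd.star → Kinding Γ (.arr A B) Kd.star
  | abs : KdWf Γ J → Kinding (.ty J :: Γ) A K → Kinding Γ (.lam J A) (.pi J K)
  | sing : Kinding Γ A (.intv B C) → Kinding Γ A (.intv A A)
  | all : KdWf Γ K → Kinding (.ty K :: Γ) A Kd.star → Kinding Γ (.all K A) Kd.star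
  | app : Kinding Γ A (.pi J K) → Kinding Γ B J → Kinding Γ (.app A B) (K.subst 0 B)
  | sub : Kinding Γ A J → SubKd Γ J K → Kinding Γ A K

/-- Typing `Γ ⊢ t : A`. -/
inductive Typing : Ctx → Tm → Ty → Prop
  | var : CtxWf Γ → Γ[x]? = some (.tm A) → Typing Γ (.var x) (A.weaken (x + 1))
  | abs : Kinding Γ A Kd.star → Kinding Γ B Kd.star →
      Typing (.tm A :: Γ) t (B.shift 0) → Typing Γ (.lam A t) (.arr A B)
  | app : Typing Γ s (.arr A B) → Typing Γ t A → Typing Γ (.app s t) B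
  | tabs : KdWf Γ K → Typing (.ty K :: Γ) t A → Typing Γ (.tlam K t) (.all K A)
  | tapp : Typing Γ t (.all K A) → Kinding Γ B K → Typing Γ (.tapp t B) (A.subst 0 B)
  | sub : Typing Γ t A → SubTy Γ A B Kd.star → Typing Γ t B

/-- Subkinding `Γ ⊢ J ≤ K`. -/
inductive SubKd : Ctx → Kd → Kd → Prop
  | intv : SubTy Γ A₂ A₁ Kd.star → SubTy Γ B₁ B₂ Kd.star →
      SubKd Γ (.intv A₁ B₁) (.intv A₂ B₂)
  | pi : KdWf Γ (.pi J₁ K₁) → SubKd Γ J₂ J₁ → SubKd (.ty J₂ :: Γ) K₁ K₂ →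
      SubKd Γ (.pi J₁ K₁) (.pi J₂ K₂)

/-- Subtyping `Γ ⊢ A ≤ B : K`. -/
inductive SubTy : Ctx → Ty → Ty → Kd → Prop
  | refl : Kinding Γ A K → SubTy Γ A A K
  | trans : SubTy Γ A B K → SubTy Γ B C K → SubTy Γ A C K
  | top : Kinding Γ A (.intv B C) → SubTy Γ A .top Kd.star
  | bot : Kinding Γ A (.intv B C) → SubTy Γ .bot A Kd.star
  | beta₁ : Kinding (.ty J :: Γ) A K → Kinding Γ B J →
      SubTy Γ (.app (.lam J A) B) (A.subst 0 B) (K.subst 0 B)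
  | beta₂ : Kinding (.ty J :: Γ) A K → Kinding Γ B J →
      SubTy Γ (A.subst 0 B) (.app (.lam J A) B) (K.subst 0 B)
  | eta₁ : Kinding Γ A (.pi J K) →
      SubTy Γ (.lam J (.app (A.shift 0) (.var 0))) A (.pi J K)
  | eta₂ : Kinding Γ A (.pi J K) →
      SubTy Γ A (.lam J (.app (A.shift 0) (.var 0))) (.pi J K)
  | arr : SubTy Γ A₂ A₁ Kd.star → SubTy Γ B₁ B₂ Kd.star →
      SubTy Γ (.arr A₁ B₁) (.arr A₂ B₂) Kd.star
  | abs : Kinding Γ (.lam J₁ A₁) (.pi J K) → Kinding Γ (.lam J₂ A₂) (.pi J K) →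
      SubTy (.ty J :: Γ) A₁ A₂ K → SubTy Γ (.lam J₁ A₁) (.lam J₂ A₂) (.pi J K)
  | all : Kinding Γ (.all K₁ A₁) Kd.star → SubKd Γ K₂ K₁ →
      SubTy (.ty K₂ :: Γ) A₁ A₂ Kd.star →
      SubTy Γ (.all K₁ A₁) (.all K₂ A₂) Kd.star
  | app : SubTy Γ A₁ A₂ (.pi J K) → TyEq Γ B₁ B₂ J →
      SubTy Γ (.app A₁ B₁) (.app A₂ B₂) (K.subst 0 B₁)
  | bnd₁ : Kinding Γ A (.intv B₁ B₂) → SubTy Γ B₁ A Kd.star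
  | bnd₂ : Kinding Γ A (.intv B₁ B₂) → SubTy Γ A B₂ Kd.star
  | intv : SubTy Γ A₁ A₂ (.intv B C) → SubTy Γ A₁ A₂ (.intv A₁ A₂)
  | sub : SubTy Γ A₁ A₂ J → SubKd Γ J K → SubTy Γ A₁ A₂ K

/-- Kind equality `Γ ⊢ J = K`, defined by antisymmetry of subkinding. -/
inductive KdEq : Ctx → Kd → Kd → Prop
  | antisym : SubKd Γ J K → SubKd Γ K J → KdEq Γ J K

/-- Type equality `Γ ⊢ A = B : K`, defined by antisymmetry of subtyping. -/
inductive TyEq : Ctx → Ty → Ty → Kd → Prop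
  | antisym : SubTy Γ A B K → SubTy Γ B A K → TyEq Γ A B K
end
/-! ## One-step β-reduction on (ordinary) types and kinds: the compatible
closure of `(λX:J.A) B →β A[X:=B]`. -/

mutual
inductive TyStep : Ty → Ty → Prop
  | beta : TyStep (.app (.lam J A) B) (A.subst 0 B)
  | arr₁ : TyStep A A' → TyStep (.arr A B) (.arr A' B)
  | arr₂ : TyStep B B' → TyStep (.arr A B) (.arr A B')
  | all₁ : KdStep K K' → TyStep (.all K A) (.all K' A)
  | all₂ : TyStep A A' → TyStep (.all K A) (.all K A')
  | lam₁ : KdStep K K' → TyStep (.lam K A) (.lam K' A)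
  | lam₂ : TyStep A A' → TyStep (.lam K A) (.lam K A')
  | app₁ : TyStep A A' → TyStep (.app A B) (.app A' B)
  | app₂ : TyStep B B' → TyStep (.app A B) (.app A B')

inductive KdStep : Kd → Kd → Prop
  | intv₁ : TyStep A A' → KdStep (.intv A B) (.intv A' B)
  | intv₂ : TyStep B B' → KdStep (.intv A B) (.intv A B')
  | pi₁ : KdStep J J' → KdStep (.pi J K) (.pi J' K)
  | pi₂ : KdStep K K' → KdStep (.pi J K) (.pi J K')
end

/-!
The head case `(λX:J₀.A) B →β A[X:=B]` follows from the rules `SubTy.beta₁`/`beta₂` after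
inverting the kinding of the abstraction; the congruence cases are direct, except that reducing
the argument `B` of an application changes its kind `K[X:=B]`. What is needed beyond the rules
is *validity* (the kind of a well-kinded type is well-formed, used for the inversion) and
*functionality* (equal arguments give equal kinds, used for the argument case).

The two depend on each other (through `Kinding.app` and `SubTy.app`), so they are proved together
as the fundamental theorem of a logical relation: every judgment stays derivable, with related
instances, under two pointwise equal substitutions, and the kinds involved are `Good`, i.e.
hereditarily functional. This in turn rests only on weakening and the substitution lemma, which
hold by a direct mutual recursion on derivations.
-/

/-! ### Renaming and instantiation -/

def upRen (ρ : ℕ → ℕ) : ℕ → ℕ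
  | 0 => 0
  | x + 1 => ρ x + 1

mutual
def Ty.ren (ρ : ℕ → ℕ) : Ty → Ty
  | .var x => .var (ρ x)
  | .top => .top
  | .bot => .bot
  | .arr a b => .arr (a.ren ρ) (b.ren ρ)
  | .all k a => .all (k.ren ρ) (a.ren (upRen ρ))
  | .lam k a => .lam (k.ren ρ) (a.ren (upRen ρ))
  | .app a b => .app (a.ren ρ) (b.ren ρ)

def Kd.ren (ρ : ℕ → ℕ) : Kd → Kd
  | .intv a b => .intv (a.ren ρ) (b.ren ρ)
  | .pi j k => .pi (j.ren ρ) (k.ren (upRen ρ))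
end

def upInst (σ : ℕ → Ty) : ℕ → Ty
  | 0 => .var 0
  | x + 1 => (σ x).ren (· + 1)

mutual
def Ty.inst (σ : ℕ → Ty) : Ty → Ty
  | .var x => σ x
  | .top => .top
  | .bot => .bot
  | .arr a b => .arr (a.inst σ) (b.inst σ)
  | .all k a => .all (k.inst σ) (a.inst (upInst σ))
  | .lam k a => .lam (k.inst σ) (a.inst (upInst σ))
  | .app a b => .app (a.inst σ) (b.inst σ)

def Kd.inst (σ : ℕ → Ty) : Kd → Kd
  | .intv a b => .intv (a.inst σ) (b.inst σ)
  | .pi j k => .pi (j.inst σ) (k.inst (upInst σ))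
end

def consInst (B : Ty) (σ : ℕ → Ty) : ℕ → Ty
  | 0 => B
  | x + 1 => σ x

theorem upInst_eq_consInst (σ : ℕ → Ty) : upInst σ = consInst (.var 0) (Ty.ren (· + 1) ∘ σ) := by
  funext x; cases x <;> rfl

theorem upRen_id : upRen id = id := by
  funext x; cases x <;> rfl

theorem upRen_comp (ρ ρ' : ℕ → ℕ) : upRen ρ' ∘ upRen ρ = upRen (ρ' ∘ ρ) := by
  funext x; cases x <;> rfl

theorem upInst_comp_upRen (σ : ℕ → Ty) (ρ : ℕ → ℕ) : upInst σ ∘ upRen ρ = upInst (σ ∘ ρ) := by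
  funext x; cases x <;> rfl

theorem upInst_var : upInst Ty.var = Ty.var := by
  funext x; cases x <;> rfl

mutual
theorem Ty.ren_id : ∀ A : Ty, A.ren id = A
  | .var _ | .top | .bot => rfl
  | .arr a b | .app a b => by simp only [Ty.ren, a.ren_id, b.ren_id]
  | .all k a | .lam k a => by simp only [Ty.ren, upRen_id, k.ren_id, a.ren_id]

theorem Kd.ren_id : ∀ K : Kd, K.ren id = K
  | .intv a b => by simp only [Kd.ren, a.ren_id, b.ren_id]
  | .pi j k => by simp only [Kd.ren, upRen_id, j.ren_id, k.ren_id]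
end

mutual
theorem Ty.ren_ren : ∀ (A : Ty) (ρ ρ' : ℕ → ℕ), (A.ren ρ).ren ρ' = A.ren (ρ' ∘ ρ)
  | .var _, _, _ | .top, _, _ | .bot, _, _ => rfl
  | .arr a b, _, _ | .app a b, _, _ => by simp only [Ty.ren, a.ren_ren, b.ren_ren]
  | .all k a, _, _ | .lam k a, _, _ => by simp only [Ty.ren, k.ren_ren, a.ren_ren, upRen_comp]

theorem Kd.ren_ren : ∀ (K : Kd) (ρ ρ' : ℕ → ℕ), (K.ren ρ).ren ρ' = K.ren (ρ' ∘ ρ)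
  | .intv a b, _, _ => by simp only [Kd.ren, a.ren_ren, b.ren_ren]
  | .pi j k, _, _ => by simp only [Kd.ren, j.ren_ren, k.ren_ren, upRen_comp]
end

mutual
theorem Ty.inst_ren : ∀ (A : Ty) (ρ : ℕ → ℕ) (σ : ℕ → Ty), (A.ren ρ).inst σ = A.inst (σ ∘ ρ)
  | .var _, _, _ | .top, _, _ | .bot, _, _ => rfl
  | .arr a b, _, _ | .app a b, _, _ => by simp only [Ty.ren, Ty.inst, a.inst_ren, b.inst_ren]
  | .all k a, _, _ | .lam k a, _, _ => by
    simp only [Ty.ren, Ty.inst, k.inst_ren, a.inst_ren, upInst_comp_upRen]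

theorem Kd.inst_ren : ∀ (K : Kd) (ρ : ℕ → ℕ) (σ : ℕ → Ty), (K.ren ρ).inst σ = K.inst (σ ∘ ρ)
  | .intv a b, _, _ => by simp only [Kd.ren, Kd.inst, a.inst_ren, b.inst_ren]
  | .pi j k, _, _ => by simp only [Kd.ren, Kd.inst, j.inst_ren, k.inst_ren, upInst_comp_upRen]
end

theorem ren_upRen_comp_upInst (σ : ℕ → Ty) (ρ : ℕ → ℕ) :
    Ty.ren (upRen ρ) ∘ upInst σ = upInst (Ty.ren ρ ∘ σ) := by
  funext x; cases x with
  | zero => rfl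
  | succ x => simp only [Function.comp, upInst, Ty.ren_ren]; rfl

mutual
theorem Ty.ren_inst : ∀ (A : Ty) (σ : ℕ → Ty) (ρ : ℕ → ℕ), (A.inst σ).ren ρ = A.inst (Ty.ren ρ ∘ σ)
  | .var _, _, _ | .top, _, _ | .bot, _, _ => rfl
  | .arr a b, _, _ | .app a b, _, _ => by simp only [Ty.ren, Ty.inst, a.ren_inst, b.ren_inst]
  | .all k a, _, _ | .lam k a, _, _ => by
    simp only [Ty.ren, Ty.inst, k.ren_inst, a.ren_inst, ren_upRen_comp_upInst]

theorem Kd.ren_inst : ∀ (K : Kd) (σ : ℕ → Ty) (ρ : ℕ → ℕ), (K.inst σ).ren ρ = K.inst (Ty.ren ρ ∘ σ)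
  | .intv a b, _, _ => by simp only [Kd.ren, Kd.inst, a.ren_inst, b.ren_inst]
  | .pi j k, _, _ => by simp only [Kd.ren, Kd.inst, j.ren_inst, k.ren_inst, ren_upRen_comp_upInst]
end

theorem inst_upInst_comp_upInst (σ τ : ℕ → Ty) :
    Ty.inst (upInst τ) ∘ upInst σ = upInst (Ty.inst τ ∘ σ) := by
  funext x; cases x with
  | zero => rfl
  | succ x => simp only [Function.comp, upInst, Ty.inst_ren, Ty.ren_inst]; rfl

mutual
theorem Ty.inst_inst : ∀ (A : Ty) (σ τ : ℕ → Ty), (A.inst σ).inst τ = A.inst (Ty.inst τ ∘ σ)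
  | .var _, _, _ | .top, _, _ | .bot, _, _ => rfl
  | .arr a b, _, _ | .app a b, _, _ => by simp only [Ty.inst, a.inst_inst, b.inst_inst]
  | .all k a, _, _ | .lam k a, _, _ => by
    simp only [Ty.inst, k.inst_inst, a.inst_inst, inst_upInst_comp_upInst]

theorem Kd.inst_inst : ∀ (K : Kd) (σ τ : ℕ → Ty), (K.inst σ).inst τ = K.inst (Ty.inst τ ∘ σ)
  | .intv a b, _, _ => by simp only [Kd.inst, a.inst_inst, b.inst_inst]
  | .pi j k, _, _ => by simp only [Kd.inst, j.inst_inst, k.inst_inst, inst_upInst_comp_upInst]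
end

mutual
theorem Ty.inst_var : ∀ A : Ty, A.inst .var = A
  | .var _ | .top | .bot => rfl
  | .arr a b | .app a b => by simp only [Ty.inst, a.inst_var, b.inst_var]
  | .all k a | .lam k a => by simp only [Ty.inst, upInst_var, k.inst_var, a.inst_var]

theorem Kd.inst_var : ∀ K : Kd, K.inst .var = K
  | .intv a b => by simp only [Kd.inst, a.inst_var, b.inst_var]
  | .pi j k => by simp only [Kd.inst, upInst_var, j.inst_var, k.inst_var]
end

theorem Ty.ren_eq_inst (A : Ty) (ρ : ℕ → ℕ) : A.ren ρ = A.inst (.var ∘ ρ) := by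
  rw [← (A.ren ρ).inst_var, Ty.inst_ren]

theorem Kd.ren_eq_inst (K : Kd) (ρ : ℕ → ℕ) : K.ren ρ = K.inst (.var ∘ ρ) := by
  rw [← (K.ren ρ).inst_var, Kd.inst_ren]

def shiftRen (c : ℕ) (x : ℕ) : ℕ := if x < c then x else x + 1

theorem upRen_shiftRen (c : ℕ) : upRen (shiftRen c) = shiftRen (c + 1) := by
  funext x; cases x with
  | zero => simp [upRen, shiftRen]
  | succ x => by_cases h : x < c <;> simp [upRen, shiftRen, h]

mutual
theorem Ty.shift_eq_ren : ∀ (A : Ty) (c : ℕ), A.shift c = A.ren (shiftRen c)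
  | .var x, c => by by_cases h : x < c <;> simp [Ty.shift, Ty.ren, shiftRen, h]
  | .top, _ | .bot, _ => rfl
  | .arr a b, _ | .app a b, _ => by simp only [Ty.shift, Ty.ren, a.shift_eq_ren, b.shift_eq_ren]
  | .all k a, _ | .lam k a, _ => by
    simp only [Ty.shift, Ty.ren, k.shift_eq_ren, a.shift_eq_ren, upRen_shiftRen]

theorem Kd.shift_eq_ren : ∀ (K : Kd) (c : ℕ), K.shift c = K.ren (shiftRen c)
  | .intv a b, _ => by simp only [Kd.shift, Kd.ren, a.shift_eq_ren, b.shift_eq_ren]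
  | .pi j k, _ => by simp only [Kd.shift, Kd.ren, j.shift_eq_ren, k.shift_eq_ren, upRen_shiftRen]
end

theorem shiftRen_zero : shiftRen 0 = (· + 1) := by
  funext x; simp [shiftRen]

theorem Ty.shift_zero (A : Ty) : A.shift 0 = A.ren (· + 1) := by
  rw [A.shift_eq_ren, shiftRen_zero]

theorem Kd.shift_zero (K : Kd) : K.shift 0 = K.ren (· + 1) := by
  rw [K.shift_eq_ren, shiftRen_zero]

def substInst (x : ℕ) (v : Ty) (y : ℕ) : Ty :=
  if y = x then v else if x < y then .var (y - 1) else .var y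

theorem upInst_substInst (x : ℕ) (v : Ty) :
    upInst (substInst x v) = substInst (x + 1) (v.shift 0) := by
  funext y; cases y with
  | zero => simp [upInst, substInst]
  | succ y =>
    rcases lt_trichotomy y x with h | rfl | h
    · simp [upInst, substInst, h.ne, Nat.not_lt_of_gt h, Ty.ren]
    · simp [upInst, substInst, Ty.shift_zero]
    · simp [upInst, substInst, h, h.ne', Ty.ren]; omega

mutual
theorem Ty.subst_eq_inst : ∀ (A : Ty) (x : ℕ) (v : Ty), A.subst x v = A.inst (substInst x v)
  | .var _, _, _ => rfl
  | .top, _, _ | .bot, _, _ => rfl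
  | .arr a b, _, _ | .app a b, _, _ => by
    simp only [Ty.subst, Ty.inst, a.subst_eq_inst, b.subst_eq_inst]
  | .all k a, _, _ | .lam k a, _, _ => by
    simp only [Ty.subst, Ty.inst, k.subst_eq_inst, a.subst_eq_inst, upInst_substInst]

theorem Kd.subst_eq_inst : ∀ (K : Kd) (x : ℕ) (v : Ty), K.subst x v = K.inst (substInst x v)
  | .intv a b, _, _ => by simp only [Kd.subst, Kd.inst, a.subst_eq_inst, b.subst_eq_inst]
  | .pi j k, _, _ => by
    simp only [Kd.subst, Kd.inst, j.subst_eq_inst, k.subst_eq_inst, upInst_substInst]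
end

theorem substInst_zero (B : Ty) : substInst 0 B = consInst B .var := by
  funext y; cases y <;> simp [substInst, consInst]

theorem Ty.subst_zero (A B : Ty) : A.subst 0 B = A.inst (consInst B .var) := by
  rw [Ty.subst_eq_inst, substInst_zero]

theorem Kd.subst_zero (K : Kd) (B : Ty) : K.subst 0 B = K.inst (consInst B .var) := by
  rw [Kd.subst_eq_inst, substInst_zero]

theorem Ty.subst_zero_inst_eq_consInst (A B : Ty) (σ : ℕ → Ty) :
    (A.subst 0 B).inst σ = A.inst (consInst (B.inst σ) σ) := by
  rw [Ty.subst_zero, Ty.inst_inst]; congr 1; funext x; cases x <;> rfl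

theorem Kd.subst_zero_inst_eq_consInst (K : Kd) (B : Ty) (σ : ℕ → Ty) :
    (K.subst 0 B).inst σ = K.inst (consInst (B.inst σ) σ) := by
  rw [Kd.subst_zero, Kd.inst_inst]; congr 1; funext x; cases x <;> rfl

theorem inst_consInst_comp_upInst (C : Ty) (σ : ℕ → Ty) :
    Ty.inst (consInst C .var) ∘ upInst σ = consInst C σ := by
  funext x; cases x with
  | zero => rfl
  | succ x => exact ((σ x).inst_ren _ _).trans (σ x).inst_var

theorem Ty.inst_upInst_subst_zero (A C : Ty) (σ : ℕ → Ty) :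
    (A.inst (upInst σ)).subst 0 C = A.inst (consInst C σ) := by
  rw [Ty.subst_zero, Ty.inst_inst, inst_consInst_comp_upInst]

theorem Kd.inst_upInst_subst_zero (K : Kd) (C : Ty) (σ : ℕ → Ty) :
    (K.inst (upInst σ)).subst 0 C = K.inst (consInst C σ) := by
  rw [Kd.subst_zero, Kd.inst_inst, inst_consInst_comp_upInst]

theorem Ty.subst_zero_inst (A B : Ty) (σ : ℕ → Ty) :
    (A.subst 0 B).inst σ = (A.inst (upInst σ)).subst 0 (B.inst σ) := by
  rw [Ty.subst_zero_inst_eq_consInst, Ty.inst_upInst_subst_zero]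

theorem Kd.subst_zero_inst (K : Kd) (B : Ty) (σ : ℕ → Ty) :
    (K.subst 0 B).inst σ = (K.inst (upInst σ)).subst 0 (B.inst σ) := by
  rw [Kd.subst_zero_inst_eq_consInst, Kd.inst_upInst_subst_zero]

theorem Ty.subst_zero_ren (A B : Ty) (ρ : ℕ → ℕ) :
    (A.subst 0 B).ren ρ = (A.ren (upRen ρ)).subst 0 (B.ren ρ) := by
  rw [Ty.ren_eq_inst, Ty.subst_zero_inst_eq_consInst, Ty.subst_zero, Ty.inst_ren, ← Ty.ren_eq_inst]
  congr 1; funext x; cases x <;> rfl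

theorem Kd.subst_zero_ren (K : Kd) (B : Ty) (ρ : ℕ → ℕ) :
    (K.subst 0 B).ren ρ = (K.ren (upRen ρ)).subst 0 (B.ren ρ) := by
  rw [Kd.ren_eq_inst, Kd.subst_zero_inst_eq_consInst, Kd.subst_zero, Kd.inst_ren, ← Ty.ren_eq_inst]
  congr 1; funext x; cases x <;> rfl

theorem Ty.shift_zero_ren (A : Ty) (ρ : ℕ → ℕ) : (A.shift 0).ren (upRen ρ) = (A.ren ρ).shift 0 := by
  rw [Ty.shift_zero, Ty.shift_zero, Ty.ren_ren, Ty.ren_ren]; rfl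

theorem Kd.shift_zero_ren (K : Kd) (ρ : ℕ → ℕ) : (K.shift 0).ren (upRen ρ) = (K.ren ρ).shift 0 := by
  rw [Kd.shift_zero, Kd.shift_zero, Kd.ren_ren, Kd.ren_ren]; rfl

theorem Ty.shift_zero_inst (A : Ty) (σ : ℕ → Ty) :
    (A.shift 0).inst (upInst σ) = (A.inst σ).shift 0 := by
  rw [Ty.shift_zero, Ty.shift_zero, Ty.inst_ren, Ty.ren_inst]; rfl

theorem Kd.shift_zero_inst (K : Kd) (σ : ℕ → Ty) :
    (K.shift 0).inst (upInst σ) = (K.inst σ).shift 0 := by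
  rw [Kd.shift_zero, Kd.shift_zero, Kd.inst_ren, Kd.ren_inst]; rfl

theorem Ty.eta_ren (J : Kd) (A : Ty) (ρ : ℕ → ℕ) :
    (Ty.lam J (.app (A.shift 0) (.var 0))).ren ρ =
      .lam (J.ren ρ) (.app ((A.ren ρ).shift 0) (.var 0)) := by
  show Ty.lam _ (.app ((A.shift 0).ren (upRen ρ)) (.var 0)) = _
  rw [Ty.shift_zero_ren]

theorem Ty.eta_inst (J : Kd) (A : Ty) (σ : ℕ → Ty) :
    (Ty.lam J (.app (A.shift 0) (.var 0))).inst σ =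
      .lam (J.inst σ) (.app ((A.inst σ).shift 0) (.var 0)) := by
  show Ty.lam _ (.app ((A.shift 0).inst (upInst σ)) (.var 0)) = _
  rw [Ty.shift_zero_inst]

theorem Kd.shift_one_subst_zero_var (K : Kd) : (K.shift 1).subst 0 (.var 0) = K := by
  rw [Kd.shift_eq_ren, Kd.subst_zero, Kd.inst_ren]
  conv_rhs => rw [← K.inst_var]
  congr 1; funext x; cases x <;> simp [shiftRen, consInst]

theorem Kd.weaken_succ (K : Kd) (n : ℕ) : K.weaken (n + 1) = (K.weaken n).shift 0 :=
  Function.iterate_succ_apply' _ _ _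

theorem Kd.weaken_succ_inst_consInst (K : Kd) (n : ℕ) (C : Ty) (σ : ℕ → Ty) :
    (K.weaken (n + 1)).inst (consInst C σ) = (K.weaken n).inst σ := by
  rw [Kd.weaken_succ, Kd.shift_zero, Kd.inst_ren]; rfl

theorem Kd.weaken_succ_inst_upInst (K : Kd) (n : ℕ) (σ : ℕ → Ty) :
    (K.weaken (n + 1)).inst (upInst σ) = ((K.weaken n).inst σ).shift 0 := by
  rw [Kd.weaken_succ, Kd.shift_zero_inst]

/-! ### Weakening and substitution -/

theorem CtxWf.ty_inv {Γ : Ctx} {K : Kd} : CtxWf (.ty K :: Γ) → CtxWf Γ ∧ KdWf Γ K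
  | .ty hΓ hK => ⟨hΓ, hK⟩

theorem KdWf.pi_inv {Γ : Ctx} {J K : Kd} : KdWf Γ (.pi J K) → KdWf Γ J ∧ KdWf (.ty J :: Γ) K
  | .pi hJ hK => ⟨hJ, hK⟩

theorem SubKd.pi_inv {Γ : Ctx} {J J' L L' : Kd} :
    SubKd Γ (.pi J L) (.pi J' L') → SubKd Γ J' J ∧ SubKd (.ty J' :: Γ) L L'
  | .pi _ hJ hL => ⟨hJ, hL⟩

mutual
theorem KdWf.ctxWf {Γ : Ctx} {K : Kd} : KdWf Γ K → CtxWf Γ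
  | .intv h _ | .pi h _ => h.ctxWf

theorem Kinding.ctxWf {Γ : Ctx} {A : Ty} {K : Kd} : Kinding Γ A K → CtxWf Γ
  | .var h _ | .top h | .bot h => h
  | .arr h _ | .sing h | .app h _ | .sub h _ => h.ctxWf
  | .abs h _ | .all h _ => h.ctxWf
end

def OBind.ren (ρ : ℕ → ℕ) : OBind → OBind
  | .ty K => .ty (K.ren ρ)
  | .tm A => .tm (A.ren ρ)

/-- `ρ` embeds `Ξ` into `Γ`. Only inserted bindings carry a well-formedness proof; for the kept
ones it is recovered from `CtxWf Ξ` (`CtxWf.ren`), because rules such as `SubKd.pi` do not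
record that the kind they bind is well-formed. -/
inductive Thin : Ctx → Ctx → (ℕ → ℕ) → Prop
  | refl {Γ : Ctx} : Thin Γ Γ id
  | skip {Ξ Γ : Ctx} {ρ : ℕ → ℕ} {b : OBind} :
      Thin Ξ Γ ρ → CtxWf (b :: Γ) → Thin Ξ (b :: Γ) ((· + 1) ∘ ρ)
  | keep {Ξ Γ : Ctx} {ρ : ℕ → ℕ} {b : OBind} : Thin Ξ Γ ρ → Thin (b :: Ξ) (b.ren ρ :: Γ) (upRen ρ)

theorem Thin.lookup {Ξ Γ : Ctx} {ρ : ℕ → ℕ} (ht : Thin Ξ Γ ρ) {x : ℕ} {K : Kd}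
    (hx : Ξ[x]? = some (.ty K)) :
    ∃ K', Γ[ρ x]? = some (.ty K') ∧ (K.weaken (x + 1)).ren ρ = K'.weaken (ρ x + 1) := by
  induction ht generalizing x K with
  | refl => exact ⟨K, hx, Kd.ren_id _⟩
  | skip _ _ ih =>
    obtain ⟨K', hK', e⟩ := ih hx
    refine ⟨K', hK', ?_⟩
    rw [← Kd.ren_ren, e, Function.comp_apply, Kd.weaken_succ _ (_ + 1), Kd.shift_zero]
  | @keep Ξ Γ ρ b _ ih =>
    cases x with
    | zero =>
      obtain rfl : b = .ty K := by simpa using hx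
      refine ⟨K.ren ρ, rfl, ?_⟩
      simp only [Kd.weaken_succ, Kd.shift_zero_ren]
      rfl
    | succ x =>
      obtain ⟨K', hK', e⟩ := ih (by simpa using hx)
      refine ⟨K', by simpa [upRen] using hK', ?_⟩
      rw [Kd.weaken_succ _ (x + 1), Kd.shift_zero_ren, e, ← Kd.weaken_succ]
      rfl

mutual
theorem CtxWf.ren {Ξ Γ : Ctx} {ρ : ℕ → ℕ} : CtxWf Ξ → Thin Ξ Γ ρ → CtxWf Γ
  | h, .refl => h
  | _, .skip _ h => h
  | .ty h hK, .keep ht => .ty (h.ren ht) (hK.ren ht)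
  | .tm h hA, .keep ht => .tm (h.ren ht) (hA.ren ht)

theorem KdWf.ren {Ξ Γ : Ctx} {ρ : ℕ → ℕ} {K : Kd} : KdWf Ξ K → Thin Ξ Γ ρ → KdWf Γ (K.ren ρ)
  | .intv hA hB, ht => .intv (hA.ren ht) (hB.ren ht)
  | .pi hJ hK, ht => .pi (hJ.ren ht) (hK.ren ht.keep)

theorem Kinding.ren {Ξ Γ : Ctx} {ρ : ℕ → ℕ} {A : Ty} {K : Kd} :
    Kinding Ξ A K → Thin Ξ Γ ρ → Kinding Γ (A.ren ρ) (K.ren ρ)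
  | .var h hx, ht => by
    obtain ⟨K', hK', e⟩ := ht.lookup hx
    exact e ▸ .var (h.ren ht) hK'
  | .top h, ht => .top (h.ren ht)
  | .bot h, ht => .bot (h.ren ht)
  | .arr hA hB, ht => .arr (hA.ren ht) (hB.ren ht)
  | .abs hJ hA, ht => .abs (hJ.ren ht) (hA.ren ht.keep)
  | .sing h, ht => .sing (h.ren ht)
  | .all hK hA, ht => .all (hK.ren ht) (hA.ren ht.keep)
  | .app hA hB, ht => Kd.subst_zero_ren .. ▸ .app (hA.ren ht) (hB.ren ht)
  | .sub h hs, ht => .sub (h.ren ht) (hs.ren ht)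

theorem SubKd.ren {Ξ Γ : Ctx} {ρ : ℕ → ℕ} {J K : Kd} :
    SubKd Ξ J K → Thin Ξ Γ ρ → SubKd Γ (J.ren ρ) (K.ren ρ)
  | .intv hA hB, ht => .intv (hA.ren ht) (hB.ren ht)
  | .pi hP hJ hK, ht => .pi (hP.ren ht) (hJ.ren ht) (hK.ren ht.keep)

theorem SubTy.ren {Ξ Γ : Ctx} {ρ : ℕ → ℕ} {A B : Ty} {K : Kd} :
    SubTy Ξ A B K → Thin Ξ Γ ρ → SubTy Γ (A.ren ρ) (B.ren ρ) (K.ren ρ)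
  | .refl h, ht => .refl (h.ren ht)
  | .trans h₁ h₂, ht => .trans (h₁.ren ht) (h₂.ren ht)
  | .top h, ht => .top (h.ren ht)
  | .bot h, ht => .bot (h.ren ht)
  | .beta₁ hA hB, ht =>
    Ty.subst_zero_ren .. ▸ Kd.subst_zero_ren .. ▸ .beta₁ (hA.ren ht.keep) (hB.ren ht)
  | .beta₂ hA hB, ht =>
    Ty.subst_zero_ren .. ▸ Kd.subst_zero_ren .. ▸ .beta₂ (hA.ren ht.keep) (hB.ren ht)
  | .eta₁ h, ht => Ty.eta_ren .. ▸ .eta₁ (h.ren ht)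
  | .eta₂ h, ht => Ty.eta_ren .. ▸ .eta₂ (h.ren ht)
  | .arr hA hB, ht => .arr (hA.ren ht) (hB.ren ht)
  | .abs h₁ h₂ h, ht => .abs (h₁.ren ht) (h₂.ren ht) (h.ren ht.keep)
  | .all h₁ hK h, ht => .all (h₁.ren ht) (hK.ren ht) (h.ren ht.keep)
  | .app hA (.antisym hB₁ hB₂), ht =>
    Kd.subst_zero_ren .. ▸ .app (hA.ren ht) (.antisym (hB₁.ren ht) (hB₂.ren ht))
  | .bnd₁ h, ht => .bnd₁ (h.ren ht)
  | .bnd₂ h, ht => .bnd₂ (h.ren ht)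
  | .intv h, ht => .intv (h.ren ht)
  | .sub h hs, ht => .sub (h.ren ht) (hs.ren ht)
end

theorem Thin.weaken {Γ : Ctx} {b : OBind} (h : CtxWf (b :: Γ)) : Thin Γ (b :: Γ) (· + 1) :=
  .skip .refl h

theorem Kinding.weaken {Γ : Ctx} {b : OBind} {A : Ty} {K : Kd} (h : Kinding Γ A K)
    (hb : CtxWf (b :: Γ)) : Kinding (b :: Γ) (A.shift 0) (K.shift 0) :=
  A.shift_zero ▸ K.shift_zero ▸ h.ren (.weaken hb)

theorem SubKd.weaken {Γ : Ctx} {b : OBind} {J K : Kd} (h : SubKd Γ J K) (hb : CtxWf (b :: Γ)) :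
    SubKd (b :: Γ) (J.shift 0) (K.shift 0) :=
  J.shift_zero ▸ K.shift_zero ▸ h.ren (.weaken hb)

inductive WfInst : Ctx → Ctx → (ℕ → Ty) → Prop
  | single {Γ : Ctx} {B : Ty} {J : Kd} : Kinding Γ B J → WfInst (.ty J :: Γ) Γ (consInst B .var)
  | narrow {Γ : Ctx} {J J' : Kd} :
      KdWf Γ J' → SubKd Γ J' J → WfInst (.ty J :: Γ) (.ty J' :: Γ) .var
  | lift {Ξ Γ : Ctx} {σ : ℕ → Ty} {J : Kd} :
      WfInst Ξ Γ σ → WfInst (.ty J :: Ξ) (.ty (J.inst σ) :: Γ) (upInst σ)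

theorem Kinding.var_zero {Γ : Ctx} {K : Kd} (h : CtxWf (.ty K :: Γ)) :
    Kinding (.ty K :: Γ) (.var 0) (K.shift 0) :=
  .var h rfl

theorem WfInst.lookup {Ξ Γ : Ctx} {σ : ℕ → Ty} (hs : WfInst Ξ Γ σ) (hΓ : CtxWf Γ) {x : ℕ}
    {K : Kd} (hx : Ξ[x]? = some (.ty K)) : Kinding Γ (σ x) ((K.weaken (x + 1)).inst σ) := by
  induction hs generalizing x K with
  | single hB =>
    rw [Kd.weaken_succ_inst_consInst, Kd.inst_var]
    cases x with
    | zero =>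
      obtain rfl : _ = K := by simpa using hx
      exact hB
    | succ x => exact .var hΓ (by simpa using hx)
  | narrow _ hJ'J =>
    rw [Kd.inst_var]
    cases x with
    | zero =>
      obtain rfl : _ = K := by simpa using hx
      exact .sub (.var_zero hΓ) (hJ'J.weaken hΓ)
    | succ x => exact .var hΓ (by simpa using hx)
  | lift _ ih =>
    rw [Kd.weaken_succ_inst_upInst]
    cases x with
    | zero =>
      obtain rfl : _ = K := by simpa using hx
      exact .var_zero hΓ
    | succ x =>
      rw [upInst, ← Ty.shift_zero]
      exact (ih hΓ.ty_inv.1 (by simpa using hx)).weaken hΓ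

mutual
theorem CtxWf.inst {Ξ Γ : Ctx} {σ : ℕ → Ty} : CtxWf Ξ → WfInst Ξ Γ σ → CtxWf Γ
  | _, .single hB => hB.ctxWf
  | _, .narrow hJ' _ => .ty hJ'.ctxWf hJ'
  | .ty h hJ, .lift hs => .ty (h.inst hs) (hJ.inst hs)

theorem KdWf.inst {Ξ Γ : Ctx} {σ : ℕ → Ty} {K : Kd} : KdWf Ξ K → WfInst Ξ Γ σ → KdWf Γ (K.inst σ)
  | .intv hA hB, hs => .intv (hA.inst hs) (hB.inst hs)
  | .pi hJ hK, hs => .pi (hJ.inst hs) (hK.inst hs.lift)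

theorem Kinding.inst {Ξ Γ : Ctx} {σ : ℕ → Ty} {A : Ty} {K : Kd} :
    Kinding Ξ A K → WfInst Ξ Γ σ → Kinding Γ (A.inst σ) (K.inst σ)
  | .var h hx, hs => hs.lookup (h.inst hs) hx
  | .top h, hs => .top (h.inst hs)
  | .bot h, hs => .bot (h.inst hs)
  | .arr hA hB, hs => .arr (hA.inst hs) (hB.inst hs)
  | .abs hJ hA, hs => .abs (hJ.inst hs) (hA.inst hs.lift)
  | .sing h, hs => .sing (h.inst hs)
  | .all hK hA, hs => .all (hK.inst hs) (hA.inst hs.lift)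
  | .app hA hB, hs => Kd.subst_zero_inst .. ▸ .app (hA.inst hs) (hB.inst hs)
  | .sub h hJK, hs => .sub (h.inst hs) (hJK.inst hs)

theorem SubKd.inst {Ξ Γ : Ctx} {σ : ℕ → Ty} {J K : Kd} :
    SubKd Ξ J K → WfInst Ξ Γ σ → SubKd Γ (J.inst σ) (K.inst σ)
  | .intv hA hB, hs => .intv (hA.inst hs) (hB.inst hs)
  | .pi hP hJ hK, hs => .pi (hP.inst hs) (hJ.inst hs) (hK.inst hs.lift)

theorem SubTy.inst {Ξ Γ : Ctx} {σ : ℕ → Ty} {A B : Ty} {K : Kd} :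
    SubTy Ξ A B K → WfInst Ξ Γ σ → SubTy Γ (A.inst σ) (B.inst σ) (K.inst σ)
  | .refl h, hs => .refl (h.inst hs)
  | .trans h₁ h₂, hs => .trans (h₁.inst hs) (h₂.inst hs)
  | .top h, hs => .top (h.inst hs)
  | .bot h, hs => .bot (h.inst hs)
  | .beta₁ hA hB, hs =>
    Ty.subst_zero_inst .. ▸ Kd.subst_zero_inst .. ▸ .beta₁ (hA.inst hs.lift) (hB.inst hs)
  | .beta₂ hA hB, hs =>
    Ty.subst_zero_inst .. ▸ Kd.subst_zero_inst .. ▸ .beta₂ (hA.inst hs.lift) (hB.inst hs)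
  | .eta₁ h, hs => Ty.eta_inst .. ▸ .eta₁ (h.inst hs)
  | .eta₂ h, hs => Ty.eta_inst .. ▸ .eta₂ (h.inst hs)
  | .arr hA hB, hs => .arr (hA.inst hs) (hB.inst hs)
  | .abs h₁ h₂ h, hs => .abs (h₁.inst hs) (h₂.inst hs) (h.inst hs.lift)
  | .all h₁ hK h, hs => .all (h₁.inst hs) (hK.inst hs) (h.inst hs.lift)
  | .app hA (.antisym hB₁ hB₂), hs =>
    Kd.subst_zero_inst .. ▸ .app (hA.inst hs) (.antisym (hB₁.inst hs) (hB₂.inst hs))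
  | .bnd₁ h, hs => .bnd₁ (h.inst hs)
  | .bnd₂ h, hs => .bnd₂ (h.inst hs)
  | .intv h, hs => .intv (h.inst hs)
  | .sub h hJK, hs => .sub (h.inst hs) (hJK.inst hs)
end

theorem Kinding.subst {Γ : Ctx} {J K : Kd} {A B : Ty} (h : Kinding (.ty J :: Γ) A K)
    (hB : Kinding Γ B J) : Kinding Γ (A.subst 0 B) (K.subst 0 B) :=
  Ty.subst_zero .. ▸ Kd.subst_zero .. ▸ h.inst (.single hB)

theorem SubKd.subst {Γ : Ctx} {J K₁ K₂ : Kd} {B : Ty} (h : SubKd (.ty J :: Γ) K₁ K₂)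
    (hB : Kinding Γ B J) : SubKd Γ (K₁.subst 0 B) (K₂.subst 0 B) :=
  Kd.subst_zero K₁ B ▸ Kd.subst_zero K₂ B ▸ h.inst (.single hB)

theorem KdWf.narrow {Γ : Ctx} {J J' K : Kd} (h : KdWf (.ty J :: Γ) K) (hJ' : KdWf Γ J')
    (hJ'J : SubKd Γ J' J) : KdWf (.ty J' :: Γ) K :=
  K.inst_var ▸ h.inst (.narrow hJ' hJ'J)

theorem Kinding.narrow {Γ : Ctx} {J J' K : Kd} {A : Ty} (h : Kinding (.ty J :: Γ) A K)
    (hJ' : KdWf Γ J') (hJ'J : SubKd Γ J' J) : Kinding (.ty J' :: Γ) A K :=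
  A.inst_var ▸ K.inst_var ▸ h.inst (.narrow hJ' hJ'J)

theorem SubKd.narrow {Γ : Ctx} {J J' K₁ K₂ : Kd} (h : SubKd (.ty J :: Γ) K₁ K₂)
    (hJ' : KdWf Γ J') (hJ'J : SubKd Γ J' J) : SubKd (.ty J' :: Γ) K₁ K₂ :=
  K₁.inst_var ▸ K₂.inst_var ▸ h.inst (.narrow hJ' hJ'J)

theorem SubKd.refl {Γ : Ctx} {K : Kd} : KdWf Γ K → SubKd Γ K K
  | .intv hA hB => .intv (.refl hA) (.refl hB)
  | .pi hJ hK => .pi (.pi hJ hK) (SubKd.refl hJ) (SubKd.refl hK)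

theorem SubKd.trans : ∀ {K : Kd} {Γ : Ctx} {J L : Kd},
    SubKd Γ J K → SubKd Γ K L → KdWf Γ L → SubKd Γ J L
  | .intv _ _, _, _, _, .intv hA₁ hB₁, .intv hA₂ hB₂, _ => .intv (.trans hA₂ hA₁) (.trans hB₁ hB₂)
  | .pi _ _, _, _, _, .pi (.pi hJ hK) hJ₁ hK₁, .pi _ hJ₂ hK₂, .pi hL hL' =>
    .pi (.pi hJ hK) (SubKd.trans hJ₂ hJ₁ hJ) (SubKd.trans (hK₁.narrow hL hJ₂) hK₂ hL')

theorem TyEq.refl {Γ : Ctx} {A : Ty} {K : Kd} (h : Kinding Γ A K) : TyEq Γ A A K :=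
  .antisym (.refl h) (.refl h)

theorem KdEq.refl {Γ : Ctx} {K : Kd} (h : KdWf Γ K) : KdEq Γ K K :=
  .antisym (.refl h) (.refl h)

theorem TyEq.le {Γ : Ctx} {A B : Ty} {K : Kd} : TyEq Γ A B K → SubTy Γ A B K
  | .antisym h _ => h

theorem TyEq.ge {Γ : Ctx} {A B : Ty} {K : Kd} : TyEq Γ A B K → SubTy Γ B A K
  | .antisym _ h => h

theorem KdEq.le {Γ : Ctx} {J K : Kd} : KdEq Γ J K → SubKd Γ J K
  | .antisym h _ => h

theorem KdEq.ge {Γ : Ctx} {J K : Kd} : KdEq Γ J K → SubKd Γ K J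
  | .antisym _ h => h

theorem TyEq.symm {Γ : Ctx} {A B : Ty} {K : Kd} : TyEq Γ A B K → TyEq Γ B A K
  | .antisym h₁ h₂ => .antisym h₂ h₁

/-! ### Hereditarily functional kinds -/

theorem Kd.shape_ren : ∀ (K : Kd) (ρ : ℕ → ℕ), (K.ren ρ).shape = K.shape
  | .intv _ _, _ => rfl
  | .pi j k, _ => by simp only [Kd.ren, Kd.shape, j.shape_ren, k.shape_ren]

theorem Kd.shape_subst : ∀ (K : Kd) (x : ℕ) (v : Ty), (K.subst x v).shape = K.shape
  | .intv _ _, _, _ => rfl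
  | .pi j k, _, _ => by simp only [Kd.subst, Kd.shape, j.shape_subst, k.shape_subst]

theorem OBind.ren_ren (b : OBind) (ρ ρ' : ℕ → ℕ) : (b.ren ρ).ren ρ' = b.ren (ρ' ∘ ρ) := by
  cases b <;> simp only [OBind.ren, Kd.ren_ren, Ty.ren_ren]

theorem Thin.trans {Γ₁ Γ₂ Γ₃ : Ctx} {ρ ρ' : ℕ → ℕ} (ht' : Thin Γ₂ Γ₃ ρ') (ht : Thin Γ₁ Γ₂ ρ) :
    Thin Γ₁ Γ₃ (ρ' ∘ ρ) := by
  induction ht' generalizing Γ₁ ρ with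
  | refl => exact ht
  | skip _ hb ih => exact .skip (ih ht) hb
  | keep ht' ih =>
    cases ht with
    | refl => exact .keep ht'
    | skip ht hb => exact .skip (ih ht) (hb.ren ht'.keep)
    | keep ht => rw [upRen_comp, OBind.ren_ren]; exact .keep (ih ht)

/-- Hereditarily functional kinds: a `Π`-kind is good if, in every extension of the context, its
codomain sends equal arguments to comparable good kinds. Quantifying over extensions makes
goodness stable under weakening; the recursion is on the shape, which instantiation preserves. -/
def Good : SKind → Ctx → Kd → Prop
  | .star, Γ, K => KdWf Γ K
  | .arr _ _, _, .intv _ _ => False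
  | .arr s₁ s₂, Γ, .pi J L => KdWf Γ (.pi J L) ∧ Good s₁ Γ J ∧
      ∀ Γ' ρ C C', Thin Γ Γ' ρ → Kinding Γ' C (J.ren ρ) → Kinding Γ' C' (J.ren ρ) →
        TyEq Γ' C C' (J.ren ρ) →
        SubKd Γ' ((L.ren (upRen ρ)).subst 0 C) ((L.ren (upRen ρ)).subst 0 C') ∧
        Good s₂ Γ' ((L.ren (upRen ρ)).subst 0 C)

def GoodKd (Γ : Ctx) (K : Kd) : Prop := Good K.shape Γ K

theorem Good.kdWf : ∀ {s : SKind} {Γ : Ctx} {K : Kd}, Good s Γ K → KdWf Γ K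
  | .star, _, _, h => h
  | .arr _ _, _, .pi _ _, h => h.1

theorem Good.ren : ∀ {s : SKind} {Γ Γ' : Ctx} {K : Kd} {ρ : ℕ → ℕ},
    Good s Γ K → Thin Γ Γ' ρ → Good s Γ' (K.ren ρ)
  | .star, _, _, _, _, h, ht => KdWf.ren h ht
  | .arr _ _, _, _, .pi _ L, ρ, ⟨hP, hJ, hL⟩, ht => by
    refine ⟨hP.ren ht, hJ.ren ht, fun Γ'' ρ' C C' ht' hC hC' hCC' => ?_⟩
    rw [Kd.ren_ren] at hC hC' hCC'
    rw [Kd.ren_ren, upRen_comp]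
    exact hL Γ'' (ρ' ∘ ρ) C C' (ht'.trans ht) hC hC' hCC'

theorem GoodKd.kdWf {Γ : Ctx} {K : Kd} (h : GoodKd Γ K) : KdWf Γ K := Good.kdWf h

theorem GoodKd.ren {Γ Γ' : Ctx} {K : Kd} {ρ : ℕ → ℕ} (h : GoodKd Γ K) (ht : Thin Γ Γ' ρ) :
    GoodKd Γ' (K.ren ρ) := by
  unfold GoodKd; rw [Kd.shape_ren]; exact Good.ren h ht

theorem GoodKd.weaken {Γ : Ctx} {b : OBind} {K : Kd} (h : GoodKd Γ K) (hb : CtxWf (b :: Γ)) :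
    GoodKd (b :: Γ) (K.shift 0) :=
  K.shift_zero ▸ h.ren (.weaken hb)

theorem GoodKd.intv {Γ : Ctx} {A B : Ty} (h : KdWf Γ (.intv A B)) : GoodKd Γ (.intv A B) := h

theorem GoodKd.pi {Γ : Ctx} {J L : Kd} (hP : KdWf Γ (.pi J L)) (hJ : GoodKd Γ J)
    (hL : ∀ Γ' ρ C C', Thin Γ Γ' ρ → Kinding Γ' C (J.ren ρ) → Kinding Γ' C' (J.ren ρ) →
      TyEq Γ' C C' (J.ren ρ) →
      SubKd Γ' ((L.ren (upRen ρ)).subst 0 C) ((L.ren (upRen ρ)).subst 0 C') ∧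
      GoodKd Γ' ((L.ren (upRen ρ)).subst 0 C)) :
    GoodKd Γ (.pi J L) := by
  refine ⟨hP, hJ, fun Γ' ρ C C' ht hC hC' hCC' => ?_⟩
  obtain ⟨hle, hgood⟩ := hL Γ' ρ C C' ht hC hC' hCC'
  unfold GoodKd at hgood
  rw [Kd.shape_subst, Kd.shape_ren] at hgood
  exact ⟨hle, hgood⟩

theorem GoodKd.pi_dom {Γ : Ctx} {J L : Kd} (h : GoodKd Γ (.pi J L)) : GoodKd Γ J := h.2.1

theorem GoodKd.pi_cod {Γ : Ctx} {J L : Kd} {C C' : Ty} (h : GoodKd Γ (.pi J L))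
    (hC : Kinding Γ C J) (hC' : Kinding Γ C' J) (hCC' : TyEq Γ C C' J) :
    SubKd Γ (L.subst 0 C) (L.subst 0 C') ∧ GoodKd Γ (L.subst 0 C) := by
  have := h.2.2 Γ id C C' .refl
  rw [Kd.ren_id, upRen_id, Kd.ren_id] at this
  unfold GoodKd; rw [Kd.shape_subst]; exact this hC hC' hCC'

/-! ### The fundamental theorem of the logical relation -/

structure EqAt (Γ : Ctx) (t t' : Ty) (K K' : Kd) : Prop where
  kinding : Kinding Γ t K
  kinding' : Kinding Γ t' K'
  tyEq : TyEq Γ t t' K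
  good : GoodKd Γ K
  good' : GoodKd Γ K'
  kdEq : KdEq Γ K K'

structure EqInst (Ξ Γ : Ctx) (σ σ' : ℕ → Ty) : Prop where
  ctxWf : CtxWf Γ
  lookup : ∀ {x : ℕ} {K : Kd}, Ξ[x]? = some (.ty K) →
    EqAt Γ (σ x) (σ' x) ((K.weaken (x + 1)).inst σ) ((K.weaken (x + 1)).inst σ')

namespace EqAt

variable {Γ : Ctx} {t t' : Ty} {K K' : Kd}

theorem symm (h : EqAt Γ t t' K K') : EqAt Γ t' t K' K := by
  obtain ⟨ht, ht', ⟨h₁, h₂⟩, hg, hg', ⟨hK, hK'⟩⟩ := h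
  exact ⟨ht', ht, ⟨h₂.sub hK, h₁.sub hK⟩, hg', hg, ⟨hK', hK⟩⟩

theorem left (h : EqAt Γ t t' K K') : EqAt Γ t t K K :=
  ⟨h.kinding, h.kinding, .refl h.kinding, h.good, h.good, .refl h.good.kdWf⟩

theorem ren (h : EqAt Γ t t' K K') {Γ' : Ctx} {ρ : ℕ → ℕ} (ht : Thin Γ Γ' ρ) :
    EqAt Γ' (t.ren ρ) (t'.ren ρ) (K.ren ρ) (K'.ren ρ) := by
  obtain ⟨ht₁, ht₂, ⟨h₁, h₂⟩, hg, hg', ⟨hK, hK'⟩⟩ := h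
  exact ⟨ht₁.ren ht, ht₂.ren ht, ⟨h₁.ren ht, h₂.ren ht⟩, hg.ren ht, hg'.ren ht,
    ⟨hK.ren ht, hK'.ren ht⟩⟩

end EqAt

namespace EqInst

variable {Ξ Γ : Ctx} {σ σ' : ℕ → Ty}

theorem symm (p : EqInst Ξ Γ σ σ') : EqInst Ξ Γ σ' σ :=
  ⟨p.ctxWf, fun hx => (p.lookup hx).symm⟩

theorem left (p : EqInst Ξ Γ σ σ') : EqInst Ξ Γ σ σ :=
  ⟨p.ctxWf, fun hx => (p.lookup hx).left⟩

theorem ren (p : EqInst Ξ Γ σ σ') {Γ' : Ctx} {ρ : ℕ → ℕ} (ht : Thin Γ Γ' ρ) :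
    EqInst Ξ Γ' (Ty.ren ρ ∘ σ) (Ty.ren ρ ∘ σ') :=
  ⟨p.ctxWf.ren ht, fun hx => Kd.ren_inst .. ▸ Kd.ren_inst .. ▸ (p.lookup hx).ren ht⟩

theorem cons (p : EqInst Ξ Γ σ σ') {J : Kd} {C C' : Ty} (h : EqAt Γ C C' (J.inst σ) (J.inst σ')) :
    EqInst (.ty J :: Ξ) Γ (consInst C σ) (consInst C' σ') := by
  refine ⟨p.ctxWf, fun {x K} hx => ?_⟩
  rw [Kd.weaken_succ_inst_consInst, Kd.weaken_succ_inst_consInst]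
  cases x with
  | zero =>
    obtain rfl : J = K := by simpa using hx
    exact h
  | succ x => exact p.lookup (by simpa using hx)

theorem cons_tm (p : EqInst Ξ Γ σ σ') (A C C' : Ty) :
    EqInst (.tm A :: Ξ) Γ (consInst C σ) (consInst C' σ') := by
  refine ⟨p.ctxWf, fun {x K} hx => ?_⟩
  rw [Kd.weaken_succ_inst_consInst, Kd.weaken_succ_inst_consInst]
  cases x with
  | zero => simp at hx
  | succ x => exact p.lookup (by simpa using hx)

end EqInst

structure KdFun (Γ : Ctx) (σ σ' : ℕ → Ty) (K : Kd) : Prop where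
  le : SubKd Γ (K.inst σ) (K.inst σ')
  good : GoodKd Γ (K.inst σ)

structure TyFun (Γ : Ctx) (σ σ' : ℕ → Ty) (A : Ty) (K : Kd) : Prop where
  kinding : Kinding Γ (A.inst σ) (K.inst σ)
  le : SubTy Γ (A.inst σ) (A.inst σ') (K.inst σ)

theorem EqInst.lift {Ξ Γ : Ctx} {σ σ' : ℕ → Ty} {J : Kd} (p : EqInst Ξ Γ σ σ')
    (hJ : KdFun Γ σ σ' J) (hJ' : KdFun Γ σ' σ J) :
    EqInst (.ty J :: Ξ) (.ty (J.inst σ) :: Γ) (upInst σ) (upInst σ') := by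
  have hw : CtxWf (.ty (J.inst σ) :: Γ) := .ty p.ctxWf hJ.good.kdWf
  rw [upInst_eq_consInst, upInst_eq_consInst]
  refine (p.ren (.weaken hw)).cons ?_
  rw [← Kd.ren_inst, ← Kd.ren_inst, ← Kd.shift_zero, ← Kd.shift_zero]
  have hle := hJ.le.weaken hw
  exact ⟨.var_zero hw, .sub (.var_zero hw) hle, .refl (.var_zero hw), hJ.good.weaken hw,
    hJ'.good.weaken hw, ⟨hle, hJ'.le.weaken hw⟩⟩

theorem KdWf.star {Γ : Ctx} (h : CtxWf Γ) : KdWf Γ Kd.star := .intv (.bot h) (.top h)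

theorem KdWf.intv_le_star {Γ : Ctx} {A B : Ty} : KdWf Γ (.intv A B) → SubKd Γ (.intv A B) Kd.star
  | .intv hA hB => .intv (.bot hA) (.top hB)

theorem Kinding.eta {Γ : Ctx} {A : Ty} {J K : Kd} (h : Kinding Γ A (.pi J K)) (hJ : KdWf Γ J) :
    Kinding Γ (.lam J (.app (A.shift 0) (.var 0))) (.pi J K) := by
  have hw : CtxWf (.ty J :: Γ) := .ty h.ctxWf hJ
  have := Kinding.app (h.weaken hw) (.var_zero hw)
  rw [Kd.shift_one_subst_zero_var] at this
  exact .abs hJ this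

theorem SubKd.cod_subst {Γ : Ctx} {J J' L L' : Kd} {B B' : Ty} (hg : GoodKd Γ (.pi J L))
    (hg' : GoodKd Γ (.pi J' L')) (hle : SubKd Γ (.pi J L) (.pi J' L')) (hB : Kinding Γ B J)
    (hB' : Kinding Γ B' J') (hBB' : TyEq Γ B B' J) : SubKd Γ (L.subst 0 B) (L'.subst 0 B') :=
  have ⟨hJ'J, hLL'⟩ := hle.pi_inv
  .trans (hg.pi_cod hB (hB'.sub hJ'J) hBB').1 (hLL'.subst hB')
    (hg'.pi_cod hB' hB' (.refl hB')).2.kdWf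

section Fun

variable {Γ : Ctx} {σ σ' : ℕ → Ty}

theorem KdFun.star (h : CtxWf Γ) : KdFun Γ σ σ' Kd.star := ⟨.refl (.star h), KdWf.star h⟩

theorem TyFun.top (h : CtxWf Γ) : TyFun Γ σ σ' .top Kd.star := ⟨.top h, .refl (.top h)⟩

theorem TyFun.bot (h : CtxWf Γ) : TyFun Γ σ σ' .bot Kd.star := ⟨.bot h, .refl (.bot h)⟩

theorem TyFun.sub {A : Ty} {J K : Kd} (h : TyFun Γ σ σ' A J) (hJK : SubKd Γ (J.inst σ) (K.inst σ)) :
    TyFun Γ σ σ' A K :=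
  ⟨h.kinding.sub hJK, h.le.sub hJK⟩

theorem TyFun.star_of_intv {A B C : Ty} (h : TyFun Γ σ σ' A (.intv B C))
    (hK : KdFun Γ σ σ' (.intv B C)) : TyFun Γ σ σ' A Kd.star :=
  h.sub hK.good.kdWf.intv_le_star

theorem TyFun.arr {A B : Ty} (hA : TyFun Γ σ σ' A Kd.star) (hA' : TyFun Γ σ' σ A Kd.star)
    (hB : TyFun Γ σ σ' B Kd.star) : TyFun Γ σ σ' (.arr A B) Kd.star :=
  ⟨.arr hA.kinding hB.kinding, .arr hA'.le hB.le⟩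

theorem KdFun.intv {A B : Ty} (hA : TyFun Γ σ σ' A Kd.star) (hA' : TyFun Γ σ' σ A Kd.star)
    (hB : TyFun Γ σ σ' B Kd.star) : KdFun Γ σ σ' (.intv A B) :=
  ⟨.intv hA'.le hB.le, .intv (.intv hA.kinding hB.kinding)⟩

theorem KdFun.intv_lower {B C : Ty} (h : KdFun Γ σ σ' (.intv B C)) (h' : KdFun Γ σ' σ (.intv B C)) :
    TyFun Γ σ σ' B Kd.star := by
  obtain ⟨-, ⟨hB, -⟩⟩ := h
  obtain ⟨⟨hle, -⟩, -⟩ := h'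
  exact ⟨hB, hle⟩

theorem KdFun.intv_upper {B C : Ty} (h : KdFun Γ σ σ' (.intv B C)) : TyFun Γ σ σ' C Kd.star := by
  obtain ⟨⟨-, hle⟩, ⟨-, hC⟩⟩ := h
  exact ⟨hC, hle⟩

theorem KdFun.pi_dom {J K : Kd} (h : KdFun Γ σ σ' (.pi J K)) (h' : KdFun Γ σ' σ (.pi J K)) :
    KdFun Γ σ σ' J :=
  ⟨h'.le.pi_inv.1, h.good.pi_dom⟩

theorem KdFun.subst {J K : Kd} {B : Ty} (hP : KdFun Γ σ σ' (.pi J K)) (hP' : KdFun Γ σ' σ (.pi J K))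
    (hB : TyFun Γ σ σ' B J) (hB' : TyFun Γ σ' σ B J) : KdFun Γ σ σ' (K.subst 0 B) := by
  constructor <;> simp only [Kd.subst_zero_inst]
  · exact .cod_subst hP.good hP'.good hP.le hB.kinding hB'.kinding
      ⟨hB.le, hB'.le.sub hP.le.pi_inv.1⟩
  · exact (hP.good.pi_cod hB.kinding hB.kinding (.refl hB.kinding)).2

theorem EqAt.of_fun {B : Ty} {J : Kd} (hB : TyFun Γ σ σ' B J) (hB' : TyFun Γ σ' σ B J)
    (hJ : KdFun Γ σ σ' J) (hJ' : KdFun Γ σ' σ J) :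
    EqAt Γ (B.inst σ) (B.inst σ') (J.inst σ) (J.inst σ') :=
  ⟨hB.kinding, hB'.kinding, ⟨hB.le, hB'.le.sub hJ'.le⟩, hJ.good, hJ'.good, ⟨hJ.le, hJ'.le⟩⟩

end Fun

theorem GoodKd.pi_inst {Ξ Γ : Ctx} {σ σ' : ℕ → Ty} {J L : Kd} (p : EqInst Ξ Γ σ σ')
    (hP : KdWf Γ ((Kd.pi J L).inst σ)) (hJ : GoodKd Γ (J.inst σ))
    (hL : ∀ {Γ' τ τ'}, EqInst (.ty J :: Ξ) Γ' τ τ' → KdFun Γ' τ τ' L) :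
    GoodKd Γ ((Kd.pi J L).inst σ) := by
  refine GoodKd.pi hP hJ fun Γ' ρ C C' ht hC hC' hCC' => ?_
  rw [Kd.ren_inst] at hC hC' hCC'
  have hJρ : GoodKd Γ' (J.inst (Ty.ren ρ ∘ σ)) := Kd.ren_inst .. ▸ hJ.ren ht
  have := hL ((p.left.ren ht).cons ⟨hC, hC', hCC', hJρ, hJρ, .refl hJρ.kdWf⟩)
  rw [Kd.ren_inst, ren_upRen_comp_upInst, Kd.inst_upInst_subst_zero, Kd.inst_upInst_subst_zero]
  exact ⟨this.le, this.good⟩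

def SemKdWf (Ξ : Ctx) (K : Kd) : Prop :=
  ∀ {Γ σ σ'}, EqInst Ξ Γ σ σ' → KdFun Γ σ σ' K

def SemKinding (Ξ : Ctx) (A : Ty) (K : Kd) : Prop :=
  ∀ {Γ σ σ'}, EqInst Ξ Γ σ σ' → TyFun Γ σ σ' A K ∧ KdFun Γ σ σ' K

structure SubKdFun (Γ : Ctx) (σ σ' : ℕ → Ty) (J K : Kd) : Prop where
  le : SubKd Γ (J.inst σ) (K.inst σ')
  left : KdFun Γ σ σ' J
  right : KdFun Γ σ σ' K

structure SubTyFun (Γ : Ctx) (σ σ' : ℕ → Ty) (A B : Ty) (K : Kd) : Prop where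
  le : SubTy Γ (A.inst σ) (B.inst σ') (K.inst σ)
  left : TyFun Γ σ σ' A K
  right : TyFun Γ σ σ' B K
  kd : KdFun Γ σ σ' K

def SemSubKd (Ξ : Ctx) (J K : Kd) : Prop :=
  ∀ {Γ σ σ'}, EqInst Ξ Γ σ σ' → SubKdFun Γ σ σ' J K

def SemSubTy (Ξ : Ctx) (A B : Ty) (K : Kd) : Prop :=
  ∀ {Γ σ σ'}, EqInst Ξ Γ σ σ' → SubTyFun Γ σ σ' A B K

section

variable {Ξ : Ctx}

theorem SemKdWf.intv {A B : Ty} (hA : SemKinding Ξ A Kd.star) (hB : SemKinding Ξ B Kd.star) :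
    SemKdWf Ξ (.intv A B) := fun p =>
  .intv (hA p).1 (hA p.symm).1 (hB p).1

theorem SemKdWf.pi {J L : Kd} (hJ : SemKdWf Ξ J) (hL : SemKdWf (.ty J :: Ξ) L) :
    SemKdWf Ξ (.pi J L) := fun p =>
  have pL := p.lift (hJ p) (hJ p.symm)
  have hP : KdWf _ ((Kd.pi J L).inst _) := .pi (hJ p).good.kdWf (hL pL).good.kdWf
  ⟨.pi hP (hJ p.symm).le (hL (p.symm.lift (hJ p.symm) (hJ p)).symm).le,
    .pi_inst p hP (hJ p).good hL⟩

theorem SemKinding.var {x : ℕ} {K : Kd} (hx : Ξ[x]? = some (.ty K)) :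
    SemKinding Ξ (.var x) (K.weaken (x + 1)) := fun p =>
  have h := p.lookup hx
  ⟨⟨h.kinding, h.tyEq.le⟩, ⟨h.kdEq.le, h.good⟩⟩

theorem SemKinding.top : SemKinding Ξ .top Kd.star := fun p =>
  ⟨.top p.ctxWf, .star p.ctxWf⟩

theorem SemKinding.bot : SemKinding Ξ .bot Kd.star := fun p =>
  ⟨.bot p.ctxWf, .star p.ctxWf⟩

theorem SemKinding.arr {A B : Ty} (hA : SemKinding Ξ A Kd.star) (hB : SemKinding Ξ B Kd.star) :
    SemKinding Ξ (.arr A B) Kd.star := fun p =>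
  ⟨.arr (hA p).1 (hA p.symm).1 (hB p).1, .star p.ctxWf⟩

theorem SemKinding.abs {J K : Kd} {A : Ty} (hJ : SemKdWf Ξ J) (hA : SemKinding (.ty J :: Ξ) A K) :
    SemKinding Ξ (.lam J A) (.pi J K) := fun p =>
  have pL := p.lift (hJ p) (hJ p.symm)
  have pL' := p.symm.lift (hJ p.symm) (hJ p)
  have hP := SemKdWf.pi hJ (fun q => (hA q).2) p
  have hP' := SemKdWf.pi hJ (fun q => (hA q).2) p.symm
  have hlam := Kinding.abs (hJ p).good.kdWf (hA pL).1.kinding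
  have hlam' := Kinding.abs (hJ p.symm).good.kdWf (hA pL').1.kinding
  ⟨⟨hlam, .abs hlam (hlam'.sub hP'.le) (hA pL).1.le⟩, hP⟩

theorem SemKinding.sing {A B C : Ty} (h : SemKinding Ξ A (.intv B C)) :
    SemKinding Ξ A (.intv A A) := fun p =>
  have hA := (h p).1.star_of_intv (h p).2
  have hA' := (h p.symm).1.star_of_intv (h p.symm).2
  ⟨⟨.sing (h p).1.kinding, .sub (.intv (h p).1.le) (.intv (.refl hA.kinding) hA'.le)⟩,
    .intv hA hA' hA⟩

theorem SemKinding.all {K : Kd} {A : Ty} (hK : SemKdWf Ξ K)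
    (hA : SemKinding (.ty K :: Ξ) A Kd.star) :
    SemKinding Ξ (.all K A) Kd.star := fun p =>
  have hall := Kinding.all (hK p).good.kdWf (hA (p.lift (hK p) (hK p.symm))).1.kinding
  ⟨⟨hall, .all hall (hK p.symm).le (hA (p.symm.lift (hK p.symm) (hK p)).symm).1.le⟩,
    .star p.ctxWf⟩

theorem SemKinding.app {A B : Ty} {J K : Kd} (hA : SemKinding Ξ A (.pi J K))
    (hB : SemKinding Ξ B J) :
    SemKinding Ξ (.app A B) (K.subst 0 B) := fun p => by
  have hB₁ := (hB p).1
  have hB₂ := (hB p.symm).1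
  refine ⟨⟨?_, ?_⟩, .subst (hA p).2 (hA p.symm).2 hB₁ hB₂⟩ <;> rw [Kd.subst_zero_inst]
  · exact .app (hA p).1.kinding hB₁.kinding
  · exact .app (hA p).1.le ⟨hB₁.le, hB₂.le.sub (hA p).2.le.pi_inv.1⟩

theorem SemKinding.sub {A : Ty} {J K : Kd} (hA : SemKinding Ξ A J) (hJK : SemSubKd Ξ J K) :
    SemKinding Ξ A K := fun p =>
  ⟨(hA p).1.sub (hJK p.left).le, (hJK p).right⟩

theorem SemSubKd.intv {A₁ A₂ B₁ B₂ : Ty} (hA : SemSubTy Ξ A₂ A₁ Kd.star)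
    (hB : SemSubTy Ξ B₁ B₂ Kd.star) : SemSubKd Ξ (.intv A₁ B₁) (.intv A₂ B₂) := fun p =>
  ⟨.intv (hA p.symm).le (hB p).le, .intv (hA p).right (hA p.symm).right (hB p).left,
    .intv (hA p).left (hA p.symm).left (hB p).right⟩

theorem SemSubKd.pi {J₁ J₂ K₁ K₂ : Kd} (hP : SemKdWf Ξ (.pi J₁ K₁)) (hJ : SemSubKd Ξ J₂ J₁)
    (hK : SemSubKd (.ty J₂ :: Ξ) K₁ K₂) : SemSubKd Ξ (.pi J₁ K₁) (.pi J₂ K₂) := fun p =>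
  have hJ₂ : SemKdWf Ξ J₂ := fun q => (hJ q).left
  ⟨.pi (hP p).good.kdWf (hJ p.symm).le (hK (p.symm.lift (hJ₂ p.symm) (hJ₂ p)).symm).le, hP p,
    SemKdWf.pi hJ₂ (fun q => (hK q).right) p⟩

theorem SemSubTy.refl {A : Ty} {K : Kd} (h : SemKinding Ξ A K) : SemSubTy Ξ A A K := fun p =>
  ⟨(h p).1.le, (h p).1, (h p).1, (h p).2⟩

theorem SemSubTy.trans {A B C : Ty} {K : Kd} (h₁ : SemSubTy Ξ A B K) (h₂ : SemSubTy Ξ B C K) :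
    SemSubTy Ξ A C K := fun p =>
  ⟨.trans (h₁ p).le ((h₂ p.symm.left).le.sub (h₁ p.symm).kd.le), (h₁ p).left, (h₂ p).right,
    (h₁ p).kd⟩

theorem SemSubTy.top {A B C : Ty} (h : SemKinding Ξ A (.intv B C)) :
    SemSubTy Ξ A .top Kd.star := fun p =>
  ⟨.top (h p).1.kinding, (h p).1.star_of_intv (h p).2, .top p.ctxWf, .star p.ctxWf⟩

theorem SemSubTy.bot {A B C : Ty} (h : SemKinding Ξ A (.intv B C)) :
    SemSubTy Ξ .bot A Kd.star := fun p =>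
  ⟨.bot (h p.symm).1.kinding, .bot p.ctxWf, (h p).1.star_of_intv (h p).2, .star p.ctxWf⟩

theorem SemKinding.beta_inst {J K : Kd} {A B : Ty} (hA : SemKinding (.ty J :: Ξ) A K)
    (hB : SemKinding Ξ B J) {Γ : Ctx} {σ σ' : ℕ → Ty} (p : EqInst Ξ Γ σ σ') :
    TyFun Γ σ σ' (A.subst 0 B) (K.subst 0 B) ∧ KdFun Γ σ σ' (K.subst 0 B) ∧
      Kinding Γ ((Ty.app (.lam J A) B).inst σ) ((K.subst 0 B).inst σ) ∧
      TyEq Γ ((Ty.app (.lam J A) B).inst σ) ((A.subst 0 B).inst σ) ((K.subst 0 B).inst σ) := by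
  have hA' := (hA (p.lift (hB p).2 (hB p.symm).2)).1.kinding
  have hB' := (hB p).1.kinding
  have hC := hA (p.cons (.of_fun (hB p).1 (hB p.symm).1 (hB p).2 (hB p.symm).2))
  have hredex := Kinding.app (.abs (hB p).2.good.kdWf hA') hB'
  have hbeta : TyEq _ _ _ _ := ⟨.beta₁ hA' hB', .beta₂ hA' hB'⟩
  rw [Ty.inst_upInst_subst_zero, Kd.inst_upInst_subst_zero] at hbeta
  rw [Kd.inst_upInst_subst_zero] at hredex
  refine ⟨⟨?_, ?_⟩, ⟨?_, ?_⟩, ?_, ?_⟩ <;>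
    simp only [Ty.subst_zero_inst_eq_consInst, Kd.subst_zero_inst_eq_consInst]
  exacts [hC.1.kinding, hC.1.le, hC.2.le, hC.2.good, hredex, hbeta]

theorem SemSubTy.beta₁ {J K : Kd} {A B : Ty} (hA : SemKinding (.ty J :: Ξ) A K)
    (hB : SemKinding Ξ B J) : SemSubTy Ξ (.app (.lam J A) B) (A.subst 0 B) (K.subst 0 B) :=
  fun p =>
  have ⟨hC, hK, hR, hRC⟩ := hA.beta_inst hB p
  have ⟨_, hK', _, hRC'⟩ := hA.beta_inst hB p.symm
  ⟨hRC.le.trans hC.le, ⟨hR, hRC.le.trans (hC.le.trans (hRC'.ge.sub hK'.le))⟩, hC, hK⟩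

theorem SemSubTy.beta₂ {J K : Kd} {A B : Ty} (hA : SemKinding (.ty J :: Ξ) A K)
    (hB : SemKinding Ξ B J) : SemSubTy Ξ (A.subst 0 B) (.app (.lam J A) B) (K.subst 0 B) :=
  fun p =>
  have ⟨hC, hK, hR, hRC⟩ := hA.beta_inst hB p
  have ⟨_, hK', _, hRC'⟩ := hA.beta_inst hB p.symm
  ⟨hC.le.trans (hRC'.ge.sub hK'.le), hC, ⟨hR, hRC.le.trans (hC.le.trans (hRC'.ge.sub hK'.le))⟩,
    hK⟩

theorem TyFun.eta {J K : Kd} {A : Ty} (h : SemKinding Ξ A (.pi J K)) {Γ : Ctx} {σ σ' : ℕ → Ty}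
    (p : EqInst Ξ Γ σ σ') : TyFun Γ σ σ' (.lam J (.app (A.shift 0) (.var 0))) (.pi J K) := by
  refine ⟨?_, ?_⟩ <;> simp only [Ty.eta_inst]
  · exact (h p).1.kinding.eta (h p).2.good.pi_dom.kdWf
  · exact (SubTy.eta₁ (h p).1.kinding).trans
      ((h p).1.le.trans ((SubTy.eta₂ (h p.symm).1.kinding).sub (h p.symm).2.le))

theorem SemSubTy.eta₁ {J K : Kd} {A : Ty} (h : SemKinding Ξ A (.pi J K)) :
    SemSubTy Ξ (.lam J (.app (A.shift 0) (.var 0))) A (.pi J K) := fun p =>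
  ⟨Ty.eta_inst .. ▸ (SubTy.eta₁ (h p).1.kinding).trans (h p).1.le, .eta h p, (h p).1, (h p).2⟩

theorem SemSubTy.eta₂ {J K : Kd} {A : Ty} (h : SemKinding Ξ A (.pi J K)) :
    SemSubTy Ξ A (.lam J (.app (A.shift 0) (.var 0))) (.pi J K) := fun p =>
  ⟨Ty.eta_inst .. ▸ (h p).1.le.trans ((SubTy.eta₂ (h p.symm).1.kinding).sub (h p.symm).2.le),
    (h p).1, .eta h p, (h p).2⟩

theorem SemSubTy.arr {A₁ A₂ B₁ B₂ : Ty} (hA : SemSubTy Ξ A₂ A₁ Kd.star)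
    (hB : SemSubTy Ξ B₁ B₂ Kd.star) : SemSubTy Ξ (.arr A₁ B₁) (.arr A₂ B₂) Kd.star := fun p =>
  ⟨.arr (hA p.symm).le (hB p).le, .arr (hA p).right (hA p.symm).right (hB p).left,
    .arr (hA p).left (hA p.symm).left (hB p).right, .star p.ctxWf⟩

theorem SemSubTy.abs {J J₁ J₂ K : Kd} {A₁ A₂ : Ty} (h₁ : SemKinding Ξ (.lam J₁ A₁) (.pi J K))
    (h₂ : SemKinding Ξ (.lam J₂ A₂) (.pi J K)) (h : SemSubTy (.ty J :: Ξ) A₁ A₂ K) :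
    SemSubTy Ξ (.lam J₁ A₁) (.lam J₂ A₂) (.pi J K) := fun p =>
  have hP := (h₁ p).2
  have hP' := (h₁ p.symm).2
  ⟨.abs (h₁ p).1.kinding ((h₂ p.symm).1.kinding.sub hP'.le)
    (h (p.lift (hP.pi_dom hP') (hP'.pi_dom hP))).le, (h₁ p).1, (h₂ p).1, hP⟩

theorem SemSubTy.all {K₁ K₂ : Kd} {A₁ A₂ : Ty} (h₁ : SemKinding Ξ (.all K₁ A₁) Kd.star)
    (hK : SemSubKd Ξ K₂ K₁) (h : SemSubTy (.ty K₂ :: Ξ) A₁ A₂ Kd.star) :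
    SemSubTy Ξ (.all K₁ A₁) (.all K₂ A₂) Kd.star := fun p =>
  have hK₂ : SemKdWf Ξ K₂ := fun q => (hK q).left
  ⟨.all (h₁ p).1.kinding (hK p.symm).le (h (p.symm.lift (hK₂ p.symm) (hK₂ p)).symm).le, (h₁ p).1,
    (SemKinding.all hK₂ (fun q => ⟨(h q).right, (h q).kd⟩) p).1, .star p.ctxWf⟩

theorem SemSubTy.app {A₁ A₂ B₁ B₂ : Ty} {J K : Kd} (hA : SemSubTy Ξ A₁ A₂ (.pi J K))
    (hB : SemSubTy Ξ B₁ B₂ J) (hB' : SemSubTy Ξ B₂ B₁ J) :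
    SemSubTy Ξ (.app A₁ B₁) (.app A₂ B₂) (K.subst 0 B₁) := fun p => by
  have hP := (hA p).kd
  have hJ' := hP.le.pi_inv.1
  have hB₁ := (hB p).left
  have hB₂ := (hB p).right
  have hB₂₁ : TyEq _ _ _ _ := ⟨(hB' p.left).le, (hB p.left).le⟩
  have hK := (hP.good.pi_cod hB₂.kinding hB₁.kinding hB₂₁).1
  refine ⟨?_, ⟨?_, ?_⟩, ⟨?_, ?_⟩, .subst hP (hA p.symm).kd hB₁ (hB p.symm).left⟩ <;>
    rw [Kd.subst_zero_inst]
  · exact .app (hA p).le ⟨(hB p).le, (hB' p.symm).le.sub hJ'⟩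
  · exact .app (hA p).left.kinding hB₁.kinding
  · exact .app (hA p).left.le ⟨hB₁.le, (hB p.symm).left.le.sub hJ'⟩
  · exact .sub (.app (hA p).right.kinding hB₂.kinding) hK
  · exact .sub (.app (hA p).right.le ⟨hB₂.le, (hB p.symm).right.le.sub hJ'⟩) hK

theorem SemSubTy.bnd₁ {A B₁ B₂ : Ty} (h : SemKinding Ξ A (.intv B₁ B₂)) :
    SemSubTy Ξ B₁ A Kd.star := fun p =>
  have hA := (h p).1.star_of_intv (h p).2
  ⟨(SubTy.bnd₁ (h p).1.kinding).trans hA.le, (h p).2.intv_lower (h p.symm).2, hA, .star p.ctxWf⟩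

theorem SemSubTy.bnd₂ {A B₁ B₂ : Ty} (h : SemKinding Ξ A (.intv B₁ B₂)) :
    SemSubTy Ξ A B₂ Kd.star := fun p =>
  ⟨(SubTy.bnd₂ (h p).1.kinding).trans (h p).2.intv_upper.le, (h p).1.star_of_intv (h p).2,
    (h p).2.intv_upper, .star p.ctxWf⟩

theorem SemSubTy.intv {A₁ A₂ B C : Ty} (h : SemSubTy Ξ A₁ A₂ (.intv B C)) :
    SemSubTy Ξ A₁ A₂ (.intv A₁ A₂) := fun p =>
  have hK := (h p).kd
  have hA₁ := (h p).left.star_of_intv hK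
  have hA₁' := (h p.symm).left.star_of_intv (h p.symm).kd
  have hA₂ := (h p).right.star_of_intv hK
  have hA₂' := (h p.symm).right.star_of_intv (h p.symm).kd
  have hA₁₂ := (h p.left).le.sub hK.good.kdWf.intv_le_star
  ⟨.sub (.intv (h p).le) (.intv (.refl hA₁.kinding) hA₂'.le),
    ⟨.sub (.sing (h p).left.kinding) (.intv (.refl hA₁.kinding) hA₁₂),
      .sub (.intv (h p).left.le) (.intv (.refl hA₁.kinding) (hA₁'.le.trans hA₁₂))⟩,
    ⟨.sub (.sing (h p).right.kinding) (.intv hA₁₂ (.refl hA₂.kinding)),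
      .sub (.intv (h p).right.le) (.intv hA₁₂ hA₂'.le)⟩,
    .intv hA₁ hA₁' hA₂⟩

theorem SemSubTy.sub {A₁ A₂ : Ty} {J K : Kd} (h : SemSubTy Ξ A₁ A₂ J) (hJK : SemSubKd Ξ J K) :
    SemSubTy Ξ A₁ A₂ K := fun p =>
  have hle := (hJK p.left).le
  ⟨(h p).le.sub hle, (h p).left.sub hle, (h p).right.sub hle, (hJK p).right⟩

end

mutual
theorem KdWf.sem {Ξ : Ctx} {K : Kd} : KdWf Ξ K → SemKdWf Ξ K
  | .intv hA hB => SemKdWf.intv hA.sem hB.sem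
  | .pi hJ hK => SemKdWf.pi hJ.sem hK.sem

theorem Kinding.sem {Ξ : Ctx} {A : Ty} {K : Kd} : Kinding Ξ A K → SemKinding Ξ A K
  | .var _ hx => SemKinding.var hx
  | .top _ => SemKinding.top
  | .bot _ => SemKinding.bot
  | .arr hA hB => SemKinding.arr hA.sem hB.sem
  | .abs hJ hA => SemKinding.abs hJ.sem hA.sem
  | .sing h => SemKinding.sing h.sem
  | .all hK hA => SemKinding.all hK.sem hA.sem
  | .app hA hB => SemKinding.app hA.sem hB.sem
  | .sub h hJK => SemKinding.sub h.sem hJK.sem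

theorem SubKd.sem {Ξ : Ctx} {J K : Kd} : SubKd Ξ J K → SemSubKd Ξ J K
  | .intv hA hB => SemSubKd.intv hA.sem hB.sem
  | .pi hP hJ hK => SemSubKd.pi hP.sem hJ.sem hK.sem

theorem SubTy.sem {Ξ : Ctx} {A B : Ty} {K : Kd} : SubTy Ξ A B K → SemSubTy Ξ A B K
  | .refl h => SemSubTy.refl h.sem
  | .trans h₁ h₂ => SemSubTy.trans h₁.sem h₂.sem
  | .top h => SemSubTy.top h.sem
  | .bot h => SemSubTy.bot h.sem
  | .beta₁ hA hB => SemSubTy.beta₁ hA.sem hB.sem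
  | .beta₂ hA hB => SemSubTy.beta₂ hA.sem hB.sem
  | .eta₁ h => SemSubTy.eta₁ h.sem
  | .eta₂ h => SemSubTy.eta₂ h.sem
  | .arr hA hB => SemSubTy.arr hA.sem hB.sem
  | .abs h₁ h₂ h => SemSubTy.abs h₁.sem h₂.sem h.sem
  | .all h₁ hK h => SemSubTy.all h₁.sem hK.sem h.sem
  | .app hA (.antisym hB₁ hB₂) => SemSubTy.app hA.sem hB₁.sem hB₂.sem
  | .bnd₁ h => SemSubTy.bnd₁ h.sem
  | .bnd₂ h => SemSubTy.bnd₂ h.sem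
  | .intv h => SemSubTy.intv h.sem
  | .sub h hJK => SemSubTy.sub h.sem hJK.sem
end

/-! ### Validity and subject reduction -/

theorem EqInst.id : ∀ {Γ : Ctx}, CtxWf Γ → EqInst Γ Γ .var .var
  | _, .nil => ⟨.nil, fun hx => by simp at hx⟩
  | _, .ty hΓ hK => by
    have p := EqInst.id hΓ
    have := p.lift (hK.sem p) (hK.sem p.symm)
    rwa [Kd.inst_var, upInst_var] at this
  | _, .tm hΓ hA => by
    rw [← upInst_var, upInst_eq_consInst]
    exact ((EqInst.id hΓ).ren (.weaken (.tm hΓ hA))).cons_tm _ _ _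

theorem Kinding.validity {Γ : Ctx} {A : Ty} {K : Kd} (h : Kinding Γ A K) : GoodKd Γ K :=
  K.inst_var ▸ (h.sem (.id h.ctxWf)).2.good

theorem Kinding.lam_inv {Γ : Ctx} {T : Ty} {P : Kd} :
    Kinding Γ T P → ∀ {J₀ A₀ J K}, T = .lam J₀ A₀ → P = .pi J K →
    ∃ K₀, Kinding (.ty J₀ :: Γ) A₀ K₀ ∧ SubKd Γ J J₀ ∧ SubKd (.ty J :: Γ) K₀ K
  | .abs hJ hA, _, _, _, _, rfl, rfl => ⟨_, hA, .refl hJ, .refl hA.validity.kdWf⟩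
  | .sub h (.pi hP hJ hK), _, _, _, _, rfl, rfl => by
    obtain ⟨K₀, hA₀, hJ₀, hK₀⟩ := h.lam_inv rfl rfl
    have ⟨hJ', hK'⟩ := (Kinding.sub h (.pi hP hJ hK)).validity.kdWf.pi_inv
    exact ⟨K₀, hA₀, hJ.trans hJ₀ hA₀.ctxWf.ty_inv.2, (hK₀.narrow hJ' hJ).trans hK hK'⟩
  | .var .., _, _, _, _, h, _ | .top _, _, _, _, _, h, _ | .bot _, _, _, _, _, h, _
  | .arr .., _, _, _, _, h, _ | .all .., _, _, _, _, h, _ | .app .., _, _, _, _, h, _ => nomatch h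
  | .sing _, _, _, _, _, _, h => nomatch h

theorem Kinding.beta {Γ : Ctx} {J₀ J K : Kd} {A₀ B : Ty} (h : Kinding Γ (.lam J₀ A₀) (.pi J K))
    (hB : Kinding Γ B J) :
    Kinding Γ (A₀.subst 0 B) (K.subst 0 B) ∧
      TyEq Γ (.app (.lam J₀ A₀) B) (A₀.subst 0 B) (K.subst 0 B) := by
  obtain ⟨K₀, hA₀, hJJ₀, hK₀K⟩ := h.lam_inv rfl rfl
  have hBJ₀ := hB.sub hJJ₀
  have hK := hK₀K.subst hB
  exact ⟨((hA₀.narrow h.validity.pi_dom.kdWf hJJ₀).sub hK₀K).subst hB,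
    ⟨(SubTy.beta₁ hA₀ hBJ₀).sub hK, (SubTy.beta₂ hA₀ hBJ₀).sub hK⟩⟩

theorem Kinding.lam_dom_congr {Γ : Ctx} {J J' K : Kd} {A : Ty} (hJ : KdWf Γ J)
    (hA : Kinding (.ty J :: Γ) A K) (hJ' : KdWf Γ J') (hJJ' : KdEq Γ J J') :
    Kinding Γ (.lam J' A) (.pi J K) ∧ TyEq Γ (.lam J A) (.lam J' A) (.pi J K) := by
  have hK := hA.validity.kdWf
  have hlam : Kinding Γ (.lam J' A) (.pi J K) :=
    .sub (.abs hJ' (hA.narrow hJ' hJJ'.ge))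
      (.pi (.pi hJ' (hK.narrow hJ' hJJ'.ge)) hJJ'.le (.refl hK))
  exact ⟨hlam, .abs (.abs hJ hA) hlam (.refl hA), .abs hlam (.abs hJ hA) (.refl hA)⟩

theorem Kinding.sing_congr {Γ : Ctx} {A A' B C : Ty} (h : Kinding Γ A (.intv B C))
    (h' : Kinding Γ A' (.intv B C)) (hAA' : TyEq Γ A A' (.intv B C)) :
    Kinding Γ A' (.intv A A) ∧ TyEq Γ A A' (.intv A A) := by
  have hstar := h.validity.kdWf.intv_le_star
  have hle := hAA'.le.sub hstar
  have hge := hAA'.ge.sub hstar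
  exact ⟨.sub (.sing h') (.intv hle hge), .sub (.intv hAA'.le) (.intv (.refl (h.sub hstar)) hge),
    .sub (.intv hAA'.ge) (.intv hle (.refl (h.sub hstar)))⟩

mutual
theorem KdWf.step {Γ : Ctx} {K K' : Kd} : KdWf Γ K → KdStep K K' → KdWf Γ K' ∧ KdEq Γ K K'
  | .intv hA hB, .intv₁ hs =>
    have ⟨hA', e⟩ := hA.step hs
    ⟨.intv hA' hB, .intv e.ge (.refl hB), .intv e.le (.refl hB)⟩
  | .intv hA hB, .intv₂ hs =>
    have ⟨hB', e⟩ := hB.step hs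
    ⟨.intv hA hB', .intv (.refl hA) e.le, .intv (.refl hA) e.ge⟩
  | .pi hJ hK, .pi₁ hs =>
    have ⟨hJ', e⟩ := hJ.step hs
    have hK' := hK.narrow hJ' e.ge
    ⟨.pi hJ' hK', .pi (.pi hJ hK) e.ge (.refl hK'), .pi (.pi hJ' hK') e.le (.refl hK)⟩
  | .pi hJ hK, .pi₂ hs =>
    have ⟨hK', e⟩ := hK.step hs
    ⟨.pi hJ hK', .pi (.pi hJ hK) (.refl hJ) e.le, .pi (.pi hJ hK') (.refl hJ) e.ge⟩

theorem Kinding.step {Γ : Ctx} {A A' : Ty} {K : Kd} :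
    Kinding Γ A K → TyStep A A' → Kinding Γ A' K ∧ TyEq Γ A A' K
  | .arr hA hB, .arr₁ hs =>
    have ⟨hA', e⟩ := hA.step hs
    ⟨.arr hA' hB, .arr e.ge (.refl hB), .arr e.le (.refl hB)⟩
  | .arr hA hB, .arr₂ hs =>
    have ⟨hB', e⟩ := hB.step hs
    ⟨.arr hA hB', .arr (.refl hA) e.le, .arr (.refl hA) e.ge⟩
  | .abs hJ hA, .lam₁ hs =>
    have ⟨hJ', e⟩ := hJ.step hs
    Kinding.lam_dom_congr hJ hA hJ' e
  | .abs hJ hA, .lam₂ hs =>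
    have ⟨hA', e⟩ := hA.step hs
    ⟨.abs hJ hA', .abs (.abs hJ hA) (.abs hJ hA') e.le, .abs (.abs hJ hA') (.abs hJ hA) e.ge⟩
  | .sing h, hs =>
    have ⟨h', e⟩ := h.step hs
    Kinding.sing_congr h h' e
  | .all hK hA, .all₁ hs =>
    have ⟨hK', e⟩ := hK.step hs
    have hA' := hA.narrow hK' e.ge
    ⟨.all hK' hA', .all (.all hK hA) e.ge (.refl hA'), .all (.all hK' hA') e.le (.refl hA)⟩
  | .all hK hA, .all₂ hs =>
    have ⟨hA', e⟩ := hA.step hs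
    ⟨.all hK hA', .all (.all hK hA) (.refl hK) e.le, .all (.all hK hA') (.refl hK) e.ge⟩
  | .app hA hB, .beta => Kinding.beta hA hB
  | .app hA hB, .app₁ hs =>
    have ⟨hA', e⟩ := hA.step hs
    ⟨.app hA' hB, .app e.le (.refl hB), .app e.ge (.refl hB)⟩
  | .app hA hB, .app₂ hs =>
    have ⟨hB', e⟩ := hB.step hs
    have hK := (hA.validity.pi_cod hB' hB e.symm).1
    ⟨.sub (.app hA hB') hK, .app (.refl hA) e, .sub (.app (.refl hA) e.symm) hK⟩
  | .sub h hJK, hs =>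
    have ⟨h', e⟩ := h.step hs
    ⟨.sub h' hJK, .sub e.le hJK, .sub e.ge hJK⟩
end

/-- **Subject reduction for well-kinded types** (Theorem 1 and its corollary):
one-step β-reductions of well-formed kinds and well-kinded types can be lifted
to declarative kind resp. type equality; consequently kind formation and
kinding are preserved by β-reduction. -/
theorem beta_red_teq :
    (∀ (Γ : Ctx) (J K : Kd), KdWf Γ J → KdStep J K → KdEq Γ J K) ∧
    (∀ (Γ : Ctx) (A B : Ty) (K : Kd), Kinding Γ A K → TyStep A B → TyEq Γ A B K) ∧
    (∀ (Γ : Ctx) (J K : Kd), KdWf Γ J → Relation.ReflTransGen KdStep J K → KdWf Γ K) ∧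
    (∀ (Γ : Ctx) (A B : Ty) (K : Kd), Kinding Γ A K →
      Relation.ReflTransGen TyStep A B → Kinding Γ B K) := by
  refine ⟨fun _ _ _ h hs => (h.step hs).2, fun _ _ _ _ h hs => (h.step hs).2, ?_, ?_⟩
  · intro _ _ _ h hs
    induction hs with
    | refl => exact h
    | tail _ hs ih => exact (ih.step hs).1
  · intro _ _ _ _ h hs
    induction hs with
    | refl => exact h
    | tail _ hs ih => exact (ih.step hs).1
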